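/- arXiv:2312.07373 — 5 statements merged into one kernel-verified Lean document; each statement's English description precedes it below -/
import Mathlib

section
/- Let (Z_j)_{j≥1} be a sequence of independent, identically distributed real-valued random variables such that E[|Z_1|^r] < ∞ for some real r ≥ 2. Then for every R > E[|Z_1|] there exists a constant C > 0 such that for all positive integers J, P[(1/J) ∑_{j=1}^J Z_j ≥ R] ≤ C · J^{−r/2}. -/
open MeasureTheory ProbabilityTheory
open scoped ENNReal NNReal

/-!
Let `δ = R - E[Z₀] > 0` and truncate at `M = δJ/r`. By Markov's inequality for the `r`-th
moment, some `Z_j` (`j < J`) exceeds `M` with probability at most `J E|Z₀|^r / M^r = O(J^{1-r})`,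
which is `O(J^{-r/2})` as `r ≥ 2`. Otherwise the sum equals the sum of the truncations
`min(Z_j, M)`, and we apply the Chernoff bound: for `W = min(Z₀, M)` and `t ≥ 0`,
`e^{tW} ≤ 1 + tW + (tW)² e^{tM}/2` since `tW ≤ tM`, so
`E e^{tW} ≤ exp(t E[Z₀] + t² e^{tM} E[Z₀²]/2)`. With `t = r log J / (2δJ)` one has
`e^{tM} = √J`, and the exponent is at most
`-(r/2) log J + 2r² E[Z₀²]/δ²` because `(log J)² ≤ 16 √J`.
-/

namespace Real

lemma exp_le_one_add_add_sq_div_two_mul_exp {x c : ℝ} (hc : 0 ≤ c) (hx : x ≤ c) :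
    exp x ≤ 1 + x + x ^ 2 / 2 * exp c := by
  set φ : ℝ → ℝ := fun y => 1 + y + y ^ 2 / 2 * exp c - exp y
  have hφ : ∀ y, HasDerivAt φ (1 + y * exp c - exp y) y := fun y => by
    refine ((((hasDerivAt_id' y).const_add 1).add
      (((hasDerivAt_pow 2 y).div_const 2).mul_const (exp c))).sub (hasDerivAt_exp y)).congr_deriv ?_
    push_cast; ring
  have hφ_diff : Differentiable ℝ φ := fun y => (hφ y).differentiableAt
  suffices φ 0 ≤ φ x by simp [φ] at this; linarith
  rcases le_total x 0 with hx0 | hx0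
  · refine antitoneOn_of_deriv_nonpos (convex_Iic 0) hφ_diff.continuous.continuousOn
      hφ_diff.differentiableOn (fun y hy => ?_) (Set.mem_Iic.2 hx0) (Set.mem_Iic.2 le_rfl) hx0
    rw [interior_Iic] at hy
    rw [(hφ y).deriv]
    nlinarith [add_one_le_exp y, one_le_exp hc, Set.mem_Iio.1 hy]
  · refine monotoneOn_of_deriv_nonneg (convex_Icc 0 c) hφ_diff.continuous.continuousOn
      hφ_diff.differentiableOn (fun y hy => ?_) ⟨le_rfl, hc⟩ ⟨hx0, hx⟩ hx0
    rw [interior_Icc] at hy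
    rw [(hφ y).deriv]
    have h1 : (1 - y) * exp y ≤ 1 := by
      nlinarith [add_one_le_exp (-y), exp_pos y, exp_neg y, mul_inv_cancel₀ (exp_pos y).ne']
    nlinarith [exp_le_exp.2 hy.2.le, hy.1]

lemma log_sq_le_sixteen_mul_sqrt {x : ℝ} (hx : 1 ≤ x) : log x ^ 2 ≤ 16 * √x := by
  have h := log_le_rpow_div (zero_le_one.trans hx) (by norm_num : (0 : ℝ) < 1 / 4)
  calc log x ^ 2 ≤ (x ^ (1 / 4 : ℝ) / (1 / 4)) ^ 2 := pow_le_pow_left₀ (log_nonneg hx) h 2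
    _ = 16 * √x := by
      rw [sqrt_eq_rpow, div_pow, ← rpow_natCast, ← rpow_mul (zero_le_one.trans hx)]
      norm_num
      ring

end Real

open Real

section Moments

variable {Ω : Type*} [MeasurableSpace Ω] {μ : Measure Ω}

lemma memLp_ofReal_of_lintegral_rpow_lt_top {f : Ω → ℝ} (hf : AEStronglyMeasurable f μ) {r : ℝ}
    (hr : 0 < r) (hmom : ∫⁻ ω, (‖f ω‖₊ : ℝ≥0∞) ^ r ∂μ < ⊤) : MemLp f (ENNReal.ofReal r) μ := by
  refine ⟨hf, ?_⟩
  rw [eLpNorm_lt_top_iff_lintegral_rpow_enorm_lt_top (by simpa using hr) ENNReal.ofReal_ne_top,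
    ENNReal.toReal_ofReal hr.le]
  simpa [enorm_eq_nnnorm] using hmom

lemma measure_lt_le_lintegral_rpow_div {f : Ω → ℝ} (hf : AEMeasurable f μ) {r M : ℝ}
    (hr : 0 < r) (hM : 0 < M) :
    μ {ω | M < f ω} ≤ (∫⁻ ω, (‖f ω‖₊ : ℝ≥0∞) ^ r ∂μ) / ENNReal.ofReal (M ^ r) := by
  refine (measure_mono fun ω (hω : M < f ω) => ?_).trans
    (meas_ge_le_lintegral_div (by fun_prop) (by simp [rpow_pos_of_pos hM]) ENNReal.ofReal_ne_top)
  show ENNReal.ofReal (M ^ r) ≤ (‖f ω‖₊ : ℝ≥0∞) ^ r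
  rw [← enorm_eq_nnnorm, Real.enorm_eq_ofReal_abs,
    ENNReal.ofReal_rpow_of_nonneg (abs_nonneg _) hr.le]
  exact ENNReal.ofReal_le_ofReal (rpow_le_rpow hM.le (hω.le.trans (le_abs_self _)) hr.le)

lemma measure_biUnion_lt_le {ι : Type*} {Z : ι → Ω → ℝ} {i₀ : ι}
    (hident : ∀ j, IdentDistrib (Z j) (Z i₀) μ μ) {r M : ℝ} (hr : 0 < r) (hM : 0 < M)
    (hmom : ∫⁻ ω, (‖Z i₀ ω‖₊ : ℝ≥0∞) ^ r ∂μ < ⊤) (s : Finset ι) :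
    μ (⋃ j ∈ s, {ω | M < Z j ω}) ≤
      ENNReal.ofReal ((∫⁻ ω, (‖Z i₀ ω‖₊ : ℝ≥0∞) ^ r ∂μ).toReal * (s.card / M ^ r)) := by
  calc μ (⋃ j ∈ s, {ω | M < Z j ω}) ≤ ∑ j ∈ s, μ {ω | M < Z j ω} := measure_biUnion_finset_le _ _
    _ = ∑ j ∈ s, μ {ω | M < Z i₀ ω} :=
      Finset.sum_congr rfl fun j _ => (hident j).measure_mem_eq measurableSet_Ioi
    _ = s.card * μ {ω | M < Z i₀ ω} := by rw [Finset.sum_const, nsmul_eq_mul]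
    _ ≤ s.card * ((∫⁻ ω, (‖Z i₀ ω‖₊ : ℝ≥0∞) ^ r ∂μ) / ENNReal.ofReal (M ^ r)) := by
      gcongr
      exact measure_lt_le_lintegral_rpow_div (hident i₀).aemeasurable_fst hr hM
    _ = _ := by
      rw [← ENNReal.ofReal_toReal hmom.ne, ← ENNReal.ofReal_div_of_pos (rpow_pos_of_pos hM r),
        ← ENNReal.ofReal_natCast, ← ENNReal.ofReal_mul (Nat.cast_nonneg _), ENNReal.toReal_ofReal
        ENNReal.toReal_nonneg]
      congr 1
      ring

end Moments

lemma setOf_le_sum_subset_union {ι Ω : Type*} (s : Finset ι) (f : ι → Ω → ℝ) (a M : ℝ) :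
    {ω | a ≤ ∑ j ∈ s, f j ω} ⊆
      (⋃ j ∈ s, {ω | M < f j ω}) ∪ {ω | a ≤ ∑ j ∈ s, min (f j ω) M} := by
  intro ω (hω : a ≤ ∑ j ∈ s, f j ω)
  by_cases h : ∃ j ∈ s, M < f j ω
  · obtain ⟨j, hj, hjM⟩ := h
    exact Or.inl (Set.mem_biUnion hj hjM)
  · push Not at h
    right
    show a ≤ ∑ j ∈ s, min (f j ω) M
    rwa [Finset.sum_congr rfl fun j hj => min_eq_left (h j hj)]

lemma div_rpow_le_rpow_neg_half {J δ r : ℝ} (hJ : 1 ≤ J) (hδ : 0 < δ) (hr : 2 ≤ r) :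
    J / (δ * J / r) ^ r ≤ (r / δ) ^ r * J ^ (-(r / 2)) := by
  have hJ0 : 0 < J := zero_lt_one.trans_le hJ
  calc J / (δ * J / r) ^ r = (r / δ) ^ r * J ^ (1 - r) := by
        rw [mul_div_right_comm, mul_rpow (by positivity) hJ0.le, rpow_sub hJ0, rpow_one,
          div_rpow (by positivity) hδ.le, div_rpow hδ.le (by positivity)]
        field_simp
    _ ≤ (r / δ) ^ r * J ^ (-(r / 2)) := by
      gcongr
      linarith

lemma exp_chernoff_exponent_le {J δ r μ σ R M t : ℝ} (hJ : 1 ≤ J) (hδ : 0 < δ) (hr : 0 < r)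
    (hσ : 0 ≤ σ) (hR : R = μ + δ) (hM : M = δ * J / r) (ht : t = r * log J / (2 * δ * J)) :
    exp (-t * (J * R) + J * (t * μ + t ^ 2 * exp (t * M) / 2 * σ)) ≤
      exp (2 * r ^ 2 * σ / δ ^ 2) * J ^ (-(r / 2)) := by
  have hJ0 : 0 < J := zero_lt_one.trans_le hJ
  have hsqrt : 0 < √J := sqrt_pos.2 hJ0
  have hexp : exp (t * M) = √J := by
    rw [sqrt_eq_rpow, rpow_def_of_pos hJ0, ht, hM]
    congr 1
    field_simp
  have hlog : log J ^ 2 / √J ≤ 16 := by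
    rw [div_le_iff₀ hsqrt]
    exact log_sq_le_sixteen_mul_sqrt hJ
  rw [rpow_def_of_pos hJ0, ← exp_add]
  refine exp_le_exp.2 ?_
  calc -t * (J * R) + J * (t * μ + t ^ 2 * exp (t * M) / 2 * σ)
      = -(r / 2) * log J + r ^ 2 * σ / (8 * δ ^ 2) * (log J ^ 2 / √J) := by
        rw [hexp, hR, ht]
        field_simp
        linear_combination 8 * r * log J ^ 2 * σ * sq_sqrt hJ0.le
    _ ≤ -(r / 2) * log J + r ^ 2 * σ / (8 * δ ^ 2) * 16 := by gcongr
    _ = _ := by ring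

section Truncation

variable {Ω : Type*} [MeasurableSpace Ω] {P : Measure Ω} [IsProbabilityMeasure P]

lemma integrable_exp_mul_of_ae_le {W : Ω → ℝ} {M t : ℝ} (hW : AEMeasurable W P)
    (hWM : ∀ᵐ ω ∂P, W ω ≤ M) (ht : 0 ≤ t) : Integrable (fun ω => exp (t * W ω)) P :=
  (integrable_const (exp (t * M))).mono' (by fun_prop) <| hWM.mono fun ω h => by
    rw [norm_of_nonneg (exp_pos _).le]
    exact exp_le_exp.2 (mul_le_mul_of_nonneg_left h ht)

lemma mgf_le_exp_of_ae_le {W : Ω → ℝ} {M t : ℝ} (hW : Integrable W P)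
    (hW2 : Integrable (fun ω => W ω ^ 2) P) (hWM : ∀ᵐ ω ∂P, W ω ≤ M) (hM : 0 ≤ M) (ht : 0 ≤ t) :
    mgf W P t ≤ exp (t * P[W] + t ^ 2 * exp (t * M) / 2 * ∫ ω, W ω ^ 2 ∂P) := by
  have hexp := integrable_exp_mul_of_ae_le hW.aestronglyMeasurable.aemeasurable hWM ht
  calc mgf W P t = ∫ ω, exp (t * W ω) ∂P := rfl
    _ ≤ ∫ ω, (1 + t * W ω + t ^ 2 * exp (t * M) / 2 * W ω ^ 2) ∂P := by
      refine integral_mono_ae hexp (by fun_prop) (hWM.mono fun ω h => ?_)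
      have := exp_le_one_add_add_sq_div_two_mul_exp (mul_nonneg ht hM)
        (mul_le_mul_of_nonneg_left h ht)
      linarith
    _ = t * P[W] + t ^ 2 * exp (t * M) / 2 * (∫ ω, W ω ^ 2 ∂P) + 1 := by
      rw [integral_add (by fun_prop) (by fun_prop), integral_add (by fun_prop) (by fun_prop),
        integral_const_mul, integral_const_mul]
      simp only [integral_const, probReal_univ, smul_eq_mul, one_mul]
      ring
    _ ≤ _ := add_one_le_exp _

lemma mgf_min_le {X : Ω → ℝ} {M t : ℝ} (hX : Integrable X P)
    (hX2 : Integrable (fun ω => X ω ^ 2) P) (hM : 0 ≤ M) (ht : 0 ≤ t) :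
    mgf (fun ω => min (X ω) M) P t ≤
      exp (t * P[X] + t ^ 2 * exp (t * M) / 2 * ∫ ω, X ω ^ 2 ∂P) := by
  have habs : ∀ ω, |min (X ω) M| ≤ |X ω| := fun ω => by
    rcases le_total (X ω) M with h | h
    · rw [min_eq_left h]
    · rw [min_eq_right h, abs_of_nonneg hM]
      exact h.trans (le_abs_self _)
  have hW : Integrable (fun ω => min (X ω) M) P :=
    hX.abs.mono' (by fun_prop) (ae_of_all _ fun ω => habs ω)
  have hW2 : Integrable (fun ω => min (X ω) M ^ 2) P :=
    hX2.mono' (by fun_prop) (ae_of_all _ fun ω => by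
      rw [norm_of_nonneg (sq_nonneg _), ← sq_abs, ← sq_abs (X ω)]
      exact pow_le_pow_left₀ (abs_nonneg _) (habs ω) 2)
  refine (mgf_le_exp_of_ae_le hW hW2 (ae_of_all _ fun ω => min_le_right _ _) hM ht).trans
    (exp_le_exp.2 (add_le_add (mul_le_mul_of_nonneg_left ?_ ht)
      (mul_le_mul_of_nonneg_left ?_ (by positivity))))
  · exact integral_mono hW hX fun ω => min_le_left _ _
  · refine integral_mono hW2 hX2 fun ω => ?_
    rw [← sq_abs, ← sq_abs (X ω)]
    exact pow_le_pow_left₀ (abs_nonneg _) (habs ω) 2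

lemma measure_le_sum_min_le {Z : ℕ → Ω → ℝ} (hmeas : ∀ j, Measurable (Z j))
    (hindep : iIndepFun Z P) (hident : ∀ j, IdentDistrib (Z j) (Z 0) P P)
    (hZ : Integrable (Z 0) P) (hZ2 : Integrable (fun ω => Z 0 ω ^ 2) P) {M t : ℝ}
    (hM : 0 ≤ M) (ht : 0 ≤ t) (s : Finset ℕ) (a : ℝ) :
    P {ω | a ≤ ∑ j ∈ s, min (Z j ω) M} ≤ ENNReal.ofReal (exp (-t * a +
      s.card * (t * P[Z 0] + t ^ 2 * exp (t * M) / 2 * ∫ ω, Z 0 ω ^ 2 ∂P))) := by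
  set W : ℕ → Ω → ℝ := fun j ω => min (Z j ω) M
  have hWmeas : ∀ j, Measurable (W j) := fun j => (hmeas j).min measurable_const
  have hWmgf : ∀ j, mgf (W j) P t = mgf (W 0) P t := fun j =>
    (((hident j).comp (measurable_id.min measurable_const)).comp
      (measurable_const.mul measurable_id).exp).integral_eq
  have hWindep : iIndepFun W P := hindep.comp _ fun _ => measurable_id.min measurable_const
  have hint : Integrable (fun ω => exp (t * (∑ j ∈ s, W j) ω)) P :=
    hWindep.integrable_exp_mul_sum hWmeas fun j _ => integrable_exp_mul_of_ae_le
      (hWmeas j).aemeasurable (ae_of_all _ fun ω => min_le_right _ _) ht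
  rw [← ofReal_measureReal]
  refine ENNReal.ofReal_le_ofReal ?_
  calc P.real {ω | a ≤ ∑ j ∈ s, W j ω} = P.real {ω | a ≤ (∑ j ∈ s, W j) ω} := by
        simp only [Finset.sum_apply]
    _ ≤ exp (-t * a) * mgf (∑ j ∈ s, W j) P t := measure_ge_le_exp_mul_mgf a ht hint
    _ = exp (-t * a) * mgf (W 0) P t ^ s.card := by
      rw [hWindep.mgf_sum hWmeas, Finset.prod_congr rfl fun j _ => hWmgf j, Finset.prod_const]
    _ ≤ exp (-t * a) * exp (t * P[Z 0] + t ^ 2 * exp (t * M) / 2 * ∫ ω, Z 0 ω ^ 2 ∂P) ^ s.card :=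
      by gcongr; exacts [mgf_nonneg, mgf_min_le hZ hZ2 hM ht]
    _ = _ := by rw [← exp_nat_mul, ← exp_add]

end Truncation

/-- **Bound on the probability of large excursions.**
If `(Z j)` are i.i.d. real random variables with `E[|Z 0|^r] < ∞` for some `r ≥ 2`,
then for every `R > E[|Z 0|]` there is `C > 0` such that for all `J ≥ 1`,
`P[(1/J) ∑_{j<J} Z j ≥ R] ≤ C J^{-r/2}`. -/
theorem prob_large_excursions
    {Ω : Type*} [MeasurableSpace Ω] (P : Measure Ω) [IsProbabilityMeasure P]
    (Z : ℕ → Ω → ℝ) (hmeas : ∀ j, Measurable (Z j))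
    (hindep : iIndepFun Z P)
    (hident : ∀ j, IdentDistrib (Z j) (Z 0) P P)
    (r : ℝ) (hr : 2 ≤ r)
    (hmom : ∫⁻ ω, (‖Z 0 ω‖₊ : ℝ≥0∞) ^ r ∂P < ⊤)
    (R : ℝ) (hR : ∫ ω, |Z 0 ω| ∂P < R) :
    ∃ C > 0, ∀ J : ℕ, 0 < J →
      P {ω | R ≤ (J : ℝ)⁻¹ * ∑ j ∈ Finset.range J, Z j ω}
        ≤ ENNReal.ofReal (C * (J : ℝ) ^ (-(r / 2))) := by
  have hLr := memLp_ofReal_of_lintegral_rpow_lt_top (hmeas 0).aestronglyMeasurable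
    (by linarith) hmom
  have hZ : Integrable (Z 0) P :=
    memLp_one_iff_integrable.1 (hLr.mono_exponent (ENNReal.one_le_ofReal.2 (by linarith)))
  have hZ2 : Integrable (fun ω => Z 0 ω ^ 2) P :=
    (hLr.mono_exponent (by simpa using ENNReal.ofReal_le_ofReal hr)).integrable_sq
  set δ := R - P[Z 0]
  have hδ : 0 < δ := sub_pos.2 ((integral_mono hZ hZ.abs fun ω => le_abs_self _).trans_lt hR)
  set σ := ∫ ω, Z 0 ω ^ 2 ∂P
  set m := (∫⁻ ω, (‖Z 0 ω‖₊ : ℝ≥0∞) ^ r ∂P).toReal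
  refine ⟨m * (r / δ) ^ r + exp (2 * r ^ 2 * σ / δ ^ 2), by positivity, fun J hJ => ?_⟩
  have hJ1 : (1 : ℝ) ≤ J := by exact_mod_cast hJ
  set M := δ * J / r
  set t := r * log J / (2 * δ * J)
  have hevent : {ω | R ≤ (J : ℝ)⁻¹ * ∑ j ∈ Finset.range J, Z j ω} ⊆
      (⋃ j ∈ Finset.range J, {ω | M < Z j ω}) ∪
        {ω | J * R ≤ ∑ j ∈ Finset.range J, min (Z j ω) M} := fun ω hω =>
    setOf_le_sum_subset_union _ _ _ M ((le_inv_mul_iff₀ (by positivity : (0 : ℝ) < J)).1 hω)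
  calc P {ω | R ≤ (J : ℝ)⁻¹ * ∑ j ∈ Finset.range J, Z j ω}
      ≤ P (⋃ j ∈ Finset.range J, {ω | M < Z j ω}) +
          P {ω | J * R ≤ ∑ j ∈ Finset.range J, min (Z j ω) M} :=
        (measure_mono hevent).trans (measure_union_le _ _)
    _ ≤ ENNReal.ofReal (m * (J / M ^ r)) + ENNReal.ofReal (exp (-t * (J * R) +
          J * (t * P[Z 0] + t ^ 2 * exp (t * M) / 2 * σ))) := by
        simpa only [Finset.card_range] using add_le_add
          (measure_biUnion_lt_le hident (by linarith) (by positivity) hmom (Finset.range J))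
          (measure_le_sum_min_le hmeas hindep hident hZ hZ2 (by positivity) (by positivity)
            (Finset.range J) (J * R))
    _ ≤ ENNReal.ofReal (m * ((r / δ) ^ r * J ^ (-(r / 2)))) +
          ENNReal.ofReal (exp (2 * r ^ 2 * σ / δ ^ 2) * J ^ (-(r / 2))) := by
        gcongr
        · exact div_rpow_le_rpow_neg_half hJ1 hδ hr
        · exact exp_chernoff_exponent_le hJ1 hδ (by linarith) (integral_nonneg fun ω => sq_nonneg _)
            (by ring) rfl rfl
    _ = _ := by
        rw [← ENNReal.ofReal_add (by positivity) (by positivity)]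
        congr 1
        ring
end

section
/- Let V be a finite-dimensional real normed vector space, and let g : ℝ^d → V and h : ℝ^d → (0, ∞) be functions such that for some ς ≥ 0 and L > 0, max(‖g(x) − g(y)‖, |h(x) − h(y)|) ≤ L (1 + |x| + |y|)^ς |x − y| for all x, y ∈ ℝ^d. Then for all p ≥ ς + 1 and all R > 0 there exists a constant C = C(p, R) > 0 such that for all probability measures μ, ν ∈ P_{p,R}(ℝ^d), ‖ (∫ g dμ)/(∫ h dμ) − (∫ g dν)/(∫ h dν) ‖ ≤ C · W_p(μ, ν). -/
open MeasureTheory ENNReal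
open scoped NNReal

noncomputable section

/-- Euclidean space `ℝ^d`. -/
abbrev Rd (d : ℕ) := EuclideanSpace ℝ (Fin d)

/-- The weight function `x ↦ exp (-β f x)`. -/
def wFn (β : ℝ) {d : ℕ} (f : Rd d → ℝ) (x : Rd d) : ℝ := Real.exp (-β * f x)

/-- The weighted mean `M_β(μ) = (∫ x e^{-β f x} dμ) / (∫ e^{-β f x} dμ)`. -/
def wMean (β : ℝ) {d : ℕ} (f : Rd d → ℝ) (μ : Measure (Rd d)) : Rd d :=
  (∫ x, wFn β f x ∂μ)⁻¹ • ∫ x, wFn β f x • x ∂μ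

/-- The weighted covariance `C_β(μ)`, a `d × d` matrix. -/
def wCov (β : ℝ) {d : ℕ} (f : Rd d → ℝ) (μ : Measure (Rd d)) :
    Matrix (Fin d) (Fin d) ℝ := fun i j =>
  (∫ x, wFn β f x ∂μ)⁻¹ *
    ∫ x, wFn β f x * ((x i - wMean β f μ i) * (x j - wMean β f μ j)) ∂μ

/-- Frobenius norm of a matrix. -/
def frobNorm {m n : ℕ} (A : Matrix (Fin m) (Fin n) ℝ) : ℝ :=
  Real.sqrt (∑ i, ∑ j, (A i j) ^ 2)

/-- `S` is the (unique) positive semidefinite square root of `A`. -/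
def IsPSDSqrt {d : ℕ} (S A : Matrix (Fin d) (Fin d) ℝ) : Prop :=
  S.PosSemidef ∧ S * S = A

/-- `μ ∈ P_{p,R}`: the `p`-th moment of `μ` is bounded, `(∫ |x|^p dμ)^{1/p} ≤ R`. -/
def MomLE (p R : ℝ) {d : ℕ} (μ : Measure (Rd d)) : Prop :=
  ∫⁻ x, (‖x‖₊ : ℝ≥0∞) ^ p ∂μ ≤ ENNReal.ofReal (R ^ p)

/-- `μ ∈ P_p`: the `p`-th moment of `μ` is finite. -/
def MomFin (p : ℝ) {d : ℕ} (μ : Measure (Rd d)) : Prop :=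
  ∫⁻ x, (‖x‖₊ : ℝ≥0∞) ^ p ∂μ < ⊤

/-- The Wasserstein-`p` distance between two probability measures on `ℝ^d`:
the infimum over couplings `π` of `μ` and `ν` of `(∬ |x - y|^p dπ)^{1/p}`. -/
def Wp (p : ℝ) {d : ℕ} (μ ν : Measure (Rd d)) : ℝ :=
  (sInf {c : ℝ≥0∞ | ∃ π : Measure (Rd d × Rd d),
      π.map Prod.fst = μ ∧ π.map Prod.snd = ν ∧
      c = (∫⁻ z, (‖z.1 - z.2‖₊ : ℝ≥0∞) ^ p ∂π) ^ (1 / p)}).toReal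

/-- `f_* = inf f`. -/
def fStar {d : ℕ} (f : Rd d → ℝ) : ℝ := sInf (Set.range f)

/-- The class `A(s, ℓ, u)` of objective functions: `f` is bounded from below,
locally Lipschitz with growth exponent `s`, and `f - inf f` grows at least like
`|x|^ℓ` and at most like `|x|^u`. -/
structure ClassA {d : ℕ} (s ℓ u : ℝ) (f : Rd d → ℝ) : Prop where
  bddBelow : BddBelow (Set.range f)
  lip : ∃ Lf > 0, ∀ x y : Rd d, |f x - f y| ≤ Lf * (1 + ‖x‖ + ‖y‖) ^ s * ‖x - y‖
  growth_lower : ∃ cl > 0, ∃ Cl > 0, ∀ x : Rd d, cl * ‖x‖ ^ ℓ - Cl ≤ f x - fStar f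
  growth_upper : ∃ cu > 0, ∃ Cu > 0, ∀ x : Rd d, f x - fStar f ≤ cu * ‖x‖ ^ u + Cu

/-- `p_M(s, ℓ) = s + 2` if `ℓ = 0`, and `1` if `ℓ > 0`. -/
def pM (s ℓ : ℝ) : ℝ := if ℓ = 0 then s + 2 else 1

/-- `p_C(s, ℓ) = s + 3` if `ℓ = 0`, and `1` if `ℓ > 0`. -/
def pC (s ℓ : ℝ) : ℝ := if ℓ = 0 then s + 3 else 1

/-!
Couple `μ` and `ν` by a measure `π` on `ℝ^d × ℝ^d`. Since `ς ≤ p - 1`, both `g` and `h` satisfy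
`‖φ x - φ y‖ ≤ L (1 + ‖x‖ + ‖y‖)^(p-1) ‖x - y‖`; Hölder's inequality with exponents `p/(p-1)` and
`p`, together with Minkowski's bound `‖1 + ‖x‖ + ‖y‖‖_{L^p(π)} ≤ 1 + 2R`, bounds
`∫ ‖φ x - φ y‖ dπ` by `L (1 + 2R)^(p-1)` times the transport cost of `π`. This controls the
differences of numerators and of denominators. By Markov's inequality every `μ ∈ P_{p,R}` puts
mass at least `1/2` on the ball of radius `2R`, so `∫ h dμ` is at least half the minimum of `h` on
that ball, and the ratio inherits the estimate. Taking the infimum over couplings gives `W_p`.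
-/

section PolyLipschitz

variable {E W : Type*} [NormedAddCommGroup E] [NormedAddCommGroup W]

def PolyLipschitzWith (L ς : ℝ) (φ : E → W) : Prop :=
  ∀ x y, ‖φ x - φ y‖ ≤ L * (1 + ‖x‖ + ‖y‖) ^ ς * ‖x - y‖

theorem ofReal_one_add_norm_add_norm (x y : E) :
    ENNReal.ofReal (1 + ‖x‖ + ‖y‖) = 1 + ‖x‖ₑ + ‖y‖ₑ := by
  rw [ENNReal.ofReal_add (by positivity) (norm_nonneg y),
    ENNReal.ofReal_add zero_le_one (norm_nonneg x), ENNReal.ofReal_one, ofReal_norm,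
    ofReal_norm]

namespace PolyLipschitzWith

variable {L ς : ℝ} {φ : E → W}

theorem mono_exponent (hφ : PolyLipschitzWith L ς φ) (hL : 0 ≤ L) {ς' : ℝ} (hςς' : ς ≤ ς') :
    PolyLipschitzWith L ς' φ := fun x y =>
  (hφ x y).trans <| by
    gcongr L * ?_ * _
    exact Real.rpow_le_rpow_of_exponent_le (by linarith [norm_nonneg x, norm_nonneg y]) hςς'

protected theorem continuous (hφ : PolyLipschitzWith L ς φ) : Continuous φ := by
  refine continuous_iff_continuousAt.2 fun x₀ => tendsto_iff_norm_sub_tendsto_zero.2 ?_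
  have hbound : Continuous fun y => L * (1 + ‖y‖ + ‖x₀‖) ^ ς * ‖y - x₀‖ := by
    exact (continuous_const.mul ((by fun_prop : Continuous fun y : E => 1 + ‖y‖ + ‖x₀‖).rpow_const
      fun y => Or.inl (by positivity))).mul (by fun_prop)
  exact squeeze_zero (fun _ => norm_nonneg _) (fun y => hφ y x₀)
    (by simpa using hbound.tendsto x₀)

end PolyLipschitzWith

end PolyLipschitz

theorem lintegral_rpow_sub_one_mul_le {α : Type*} [MeasurableSpace α] {μ : Measure α}
    {f g : α → ℝ≥0∞} (hf : AEMeasurable f μ) (hg : AEMeasurable g μ) {p : ℝ} (hp : 1 ≤ p) :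
    ∫⁻ a, f a ^ (p - 1) * g a ∂μ
      ≤ ((∫⁻ a, f a ^ p ∂μ) ^ (1 / p)) ^ (p - 1) * (∫⁻ a, g a ^ p ∂μ) ^ (1 / p) := by
  have hp0 : p ≠ 0 := by positivity
  have hpq : (p - 1) / p + 1 / p = 1 := by field_simp; ring
  have holder := ENNReal.lintegral_mul_norm_pow_le (hf.pow_const p) (hg.pow_const p)
    (by bound : 0 ≤ (p - 1) / p) (by positivity) hpq
  simp only [← ENNReal.rpow_mul, mul_div_cancel₀ _ hp0, ENNReal.rpow_one] at holder
  rwa [← ENNReal.rpow_mul, one_div_mul_eq_div]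

theorem rpow_one_div_le_ofReal {I : ℝ≥0∞} {p R : ℝ} (hp : 0 < p) (hR : 0 ≤ R)
    (hI : I ≤ ENNReal.ofReal (R ^ p)) : I ^ (1 / p) ≤ ENNReal.ofReal R := by
  calc I ^ (1 / p) ≤ ENNReal.ofReal (R ^ p) ^ (1 / p) := by gcongr
    _ = ENNReal.ofReal R := by
      rw [← ENNReal.ofReal_rpow_of_nonneg hR hp.le, ← ENNReal.rpow_mul, mul_one_div_cancel hp.ne',
        ENNReal.rpow_one]

section Moments

variable {α E : Type*} [MeasurableSpace α] [NormedAddCommGroup E] [MeasurableSpace E]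
  [OpensMeasurableSpace E]

theorem lintegral_one_add_enorm_add_enorm_rpow_le (π : Measure α) [IsProbabilityMeasure π]
    {X Y : α → E} (hX : AEMeasurable X π) (hY : AEMeasurable Y π) {p R : ℝ} (hp : 1 ≤ p)
    (hR : 0 ≤ R) (hXm : ∫⁻ a, ‖X a‖ₑ ^ p ∂π ≤ ENNReal.ofReal (R ^ p))
    (hYm : ∫⁻ a, ‖Y a‖ₑ ^ p ∂π ≤ ENNReal.ofReal (R ^ p)) :
    (∫⁻ a, (1 + ‖X a‖ₑ + ‖Y a‖ₑ) ^ p ∂π) ^ (1 / p) ≤ ENNReal.ofReal (1 + 2 * R) := by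
  have hp0 : 0 < p := by positivity
  calc (∫⁻ a, (1 + ‖X a‖ₑ + ‖Y a‖ₑ) ^ p ∂π) ^ (1 / p)
      ≤ (∫⁻ a, (1 + ‖X a‖ₑ) ^ p ∂π) ^ (1 / p) + (∫⁻ a, ‖Y a‖ₑ ^ p ∂π) ^ (1 / p) :=
        ENNReal.lintegral_Lp_add_le (aemeasurable_const.add hX.enorm) hY.enorm hp
    _ ≤ (∫⁻ _, 1 ^ p ∂π) ^ (1 / p) + (∫⁻ a, ‖X a‖ₑ ^ p ∂π) ^ (1 / p)
          + (∫⁻ a, ‖Y a‖ₑ ^ p ∂π) ^ (1 / p) := by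
        gcongr
        exact ENNReal.lintegral_Lp_add_le aemeasurable_const hX.enorm hp
    _ ≤ 1 + ENNReal.ofReal R + ENNReal.ofReal R := by
        gcongr
        · simp
        · exact rpow_one_div_le_ofReal hp0 hR hXm
        · exact rpow_one_div_le_ofReal hp0 hR hYm
    _ = ENNReal.ofReal (1 + 2 * R) := by
        rw [two_mul, ← add_assoc, ENNReal.ofReal_add (by positivity) hR,
          ENNReal.ofReal_add zero_le_one hR, ENNReal.ofReal_one]

end Moments

namespace PolyLipschitzWith

variable {α E W : Type*} [MeasurableSpace α] [NormedAddCommGroup E] [MeasurableSpace E]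
  [OpensMeasurableSpace E] [NormedAddCommGroup W] {L p R : ℝ} {φ : E → W}

theorem lintegral_enorm_sub_le (hφ : PolyLipschitzWith L (p - 1) φ) (hL : 0 ≤ L)
    (π : Measure α) [IsProbabilityMeasure π] {X Y : α → E} (hX : AEMeasurable X π)
    (hY : AEMeasurable Y π) (hXY : AEMeasurable (fun a => X a - Y a) π) (hp : 1 ≤ p)
    (hR : 0 ≤ R) (hXm : ∫⁻ a, ‖X a‖ₑ ^ p ∂π ≤ ENNReal.ofReal (R ^ p))
    (hYm : ∫⁻ a, ‖Y a‖ₑ ^ p ∂π ≤ ENNReal.ofReal (R ^ p)) :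
    ∫⁻ a, ‖φ (X a) - φ (Y a)‖ₑ ∂π
      ≤ ENNReal.ofReal (L * (1 + 2 * R) ^ (p - 1)) * (∫⁻ a, ‖X a - Y a‖ₑ ^ p ∂π) ^ (1 / p) := by
  have hpoint : ∀ x y : E,
      ‖φ x - φ y‖ₑ ≤ ENNReal.ofReal L * ((1 + ‖x‖ₑ + ‖y‖ₑ) ^ (p - 1) * ‖x - y‖ₑ) := by
    intro x y
    rw [← ofReal_one_add_norm_add_norm, ← ofReal_norm (φ x - φ y), ← ofReal_norm (x - y),
      ENNReal.ofReal_rpow_of_nonneg (by positivity) (by linarith),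
      ← ENNReal.ofReal_mul (by positivity), ← ENNReal.ofReal_mul hL, ← mul_assoc]
    exact ENNReal.ofReal_le_ofReal (hφ x y)
  calc ∫⁻ a, ‖φ (X a) - φ (Y a)‖ₑ ∂π
      ≤ ∫⁻ a, ENNReal.ofReal L * ((1 + ‖X a‖ₑ + ‖Y a‖ₑ) ^ (p - 1) * ‖X a - Y a‖ₑ) ∂π :=
        lintegral_mono fun a => hpoint (X a) (Y a)
    _ = ENNReal.ofReal L * ∫⁻ a, (1 + ‖X a‖ₑ + ‖Y a‖ₑ) ^ (p - 1) * ‖X a - Y a‖ₑ ∂π :=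
        lintegral_const_mul' _ _ ENNReal.ofReal_ne_top
    _ ≤ ENNReal.ofReal L * (((∫⁻ a, (1 + ‖X a‖ₑ + ‖Y a‖ₑ) ^ p ∂π) ^ (1 / p)) ^ (p - 1)
          * (∫⁻ a, ‖X a - Y a‖ₑ ^ p ∂π) ^ (1 / p)) := by
        gcongr
        exact lintegral_rpow_sub_one_mul_le ((aemeasurable_const.add hX.enorm).add hY.enorm)
          hXY.enorm hp
    _ ≤ ENNReal.ofReal L * (ENNReal.ofReal (1 + 2 * R) ^ (p - 1)
          * (∫⁻ a, ‖X a - Y a‖ₑ ^ p ∂π) ^ (1 / p)) := by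
        gcongr
        exact lintegral_one_add_enorm_add_enorm_rpow_le π hX hY hp hR hXm hYm
    _ = ENNReal.ofReal (L * (1 + 2 * R) ^ (p - 1)) * (∫⁻ a, ‖X a - Y a‖ₑ ^ p ∂π) ^ (1 / p) := by
        rw [ENNReal.ofReal_mul hL, ENNReal.ofReal_rpow_of_nonneg (by positivity) (by linarith),
          mul_assoc]

end PolyLipschitzWith

theorem norm_integral_le_of_lintegral_enorm_le {α W : Type*} [MeasurableSpace α] {μ : Measure α}
    [NormedAddCommGroup W] [NormedSpace ℝ W] {f : α → W} {c : ℝ} (hc : 0 ≤ c)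
    (hf : ∫⁻ a, ‖f a‖ₑ ∂μ ≤ ENNReal.ofReal c) : ‖∫ a, f a ∂μ‖ ≤ c :=
  (ENNReal.ofReal_le_ofReal_iff hc).1 <|
    (ofReal_norm _).trans_le ((enorm_integral_le_lintegral_enorm _).trans hf)

namespace PolyLipschitzWith

variable {E W : Type*} [NormedAddCommGroup E] [MeasurableSpace E] [OpensMeasurableSpace E]
  [NormedAddCommGroup W] {L p R : ℝ} {φ : E → W} {μ : Measure E} [IsProbabilityMeasure μ]

theorem lintegral_enorm_sub_apply_zero_le (hφ : PolyLipschitzWith L (p - 1) φ) (hL : 0 ≤ L)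
    (hp : 1 ≤ p) (hR : 0 ≤ R) (hμ : ∫⁻ x, ‖x‖ₑ ^ p ∂μ ≤ ENNReal.ofReal (R ^ p)) :
    ∫⁻ x, ‖φ x - φ 0‖ₑ ∂μ ≤ ENNReal.ofReal (L * (1 + 2 * R) ^ (p - 1) * R) := by
  have hp0 : 0 < p := by positivity
  have h0 : ∫⁻ _ : E, ‖(0 : E)‖ₑ ^ p ∂μ ≤ ENNReal.ofReal (R ^ p) := by
    simp [ENNReal.zero_rpow_of_pos hp0]
  calc ∫⁻ x, ‖φ x - φ 0‖ₑ ∂μ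
      ≤ ENNReal.ofReal (L * (1 + 2 * R) ^ (p - 1)) * (∫⁻ x, ‖x - 0‖ₑ ^ p ∂μ) ^ (1 / p) :=
        hφ.lintegral_enorm_sub_le (X := fun x => x) (Y := fun _ => 0) hL μ aemeasurable_id
          aemeasurable_const (by simpa using aemeasurable_id') hp hR hμ h0
    _ ≤ ENNReal.ofReal (L * (1 + 2 * R) ^ (p - 1)) * ENNReal.ofReal R := by
        gcongr
        simpa using rpow_one_div_le_ofReal hp0 hR hμ
    _ = ENNReal.ofReal (L * (1 + 2 * R) ^ (p - 1) * R) :=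
        (ENNReal.ofReal_mul (by positivity)).symm

protected theorem integrable [SecondCountableTopology E] (hφ : PolyLipschitzWith L (p - 1) φ)
    (hL : 0 ≤ L) (hp : 1 ≤ p) (hR : 0 ≤ R)
    (hμ : ∫⁻ x, ‖x‖ₑ ^ p ∂μ ≤ ENNReal.ofReal (R ^ p)) : Integrable φ μ := by
  have hsub : Integrable (fun x => φ x - φ 0) μ :=
    ⟨(hφ.continuous.sub continuous_const).aestronglyMeasurable,
      (hφ.lintegral_enorm_sub_apply_zero_le hL hp hR hμ).trans_lt ENNReal.ofReal_lt_top⟩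
  exact (hsub.add (integrable_const (φ 0))).congr (ae_of_all _ fun x => sub_add_cancel (φ x) (φ 0))

theorem norm_integral_le [SecondCountableTopology E] [NormedSpace ℝ W] [CompleteSpace W]
    (hφ : PolyLipschitzWith L (p - 1) φ) (hL : 0 ≤ L) (hp : 1 ≤ p) (hR : 0 ≤ R)
    (hμ : ∫⁻ x, ‖x‖ₑ ^ p ∂μ ≤ ENNReal.ofReal (R ^ p)) :
    ‖∫ x, φ x ∂μ‖ ≤ ‖φ 0‖ + L * (1 + 2 * R) ^ (p - 1) * R := by
  have hsplit : ∫ x, φ x ∂μ = ∫ x, (φ x - φ 0) ∂μ + φ 0 := by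
    rw [integral_sub (hφ.integrable hL hp hR hμ) (integrable_const _)]
    simp
  rw [hsplit, add_comm ‖φ 0‖]
  refine (norm_add_le _ _).trans ?_
  gcongr
  exact norm_integral_le_of_lintegral_enorm_le (by positivity)
    (hφ.lintegral_enorm_sub_apply_zero_le hL hp hR hμ)

end PolyLipschitzWith

section Coupling

variable {E : Type*} [MeasurableSpace E]

structure IsCoupling (π : Measure (E × E)) (μ ν : Measure E) : Prop where
  map_fst : π.map Prod.fst = μ
  map_snd : π.map Prod.snd = ν

namespace IsCoupling

variable {π : Measure (E × E)} {μ ν : Measure E}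

theorem prod (μ ν : Measure E) [IsProbabilityMeasure μ] [IsProbabilityMeasure ν] :
    IsCoupling (μ.prod ν) μ ν :=
  ⟨Measure.fst_prod, Measure.snd_prod⟩

theorem isProbabilityMeasure [IsProbabilityMeasure μ] (hπ : IsCoupling π μ ν) :
    IsProbabilityMeasure π := by
  have h := hπ.map_fst ▸ (inferInstance : IsProbabilityMeasure μ)
  exact ⟨by simpa [Measure.map_apply measurable_fst MeasurableSet.univ] using h.measure_univ⟩

theorem lintegral_fst (hπ : IsCoupling π μ ν) {f : E → ℝ≥0∞} (hf : Measurable f) :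
    ∫⁻ z, f z.1 ∂π = ∫⁻ x, f x ∂μ := by
  rw [← hπ.map_fst, lintegral_map hf measurable_fst]

theorem lintegral_snd (hπ : IsCoupling π μ ν) {f : E → ℝ≥0∞} (hf : Measurable f) :
    ∫⁻ z, f z.2 ∂π = ∫⁻ x, f x ∂ν := by
  rw [← hπ.map_snd, lintegral_map hf measurable_snd]

end IsCoupling

variable [NormedAddCommGroup E]

def transportCost (p : ℝ) (π : Measure (E × E)) : ℝ≥0∞ :=
  (∫⁻ z, ‖z.1 - z.2‖ₑ ^ p ∂π) ^ (1 / p)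

theorem IsCoupling.transportCost_le [OpensMeasurableSpace E] {π : Measure (E × E)}
    {μ ν : Measure E} [IsProbabilityMeasure μ] (hπ : IsCoupling π μ ν) {p R : ℝ} (hp : 1 ≤ p)
    (hR : 0 ≤ R) (hμ : ∫⁻ x, ‖x‖ₑ ^ p ∂μ ≤ ENNReal.ofReal (R ^ p))
    (hν : ∫⁻ x, ‖x‖ₑ ^ p ∂ν ≤ ENNReal.ofReal (R ^ p)) :
    transportCost p π ≤ ENNReal.ofReal (1 + 2 * R) := by
  have := hπ.isProbabilityMeasure
  refine le_trans ?_ (lintegral_one_add_enorm_add_enorm_rpow_le π measurable_fst.aemeasurable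
    measurable_snd.aemeasurable hp hR ?_ ?_)
  · unfold transportCost
    gcongr with z
    exact enorm_sub_le.trans (by rw [add_assoc]; exact le_add_self)
  · rwa [hπ.lintegral_fst (measurable_enorm.pow_const p)]
  · rwa [hπ.lintegral_snd (measurable_enorm.pow_const p)]

end Coupling

theorem PolyLipschitzWith.norm_integral_sub_le {E W : Type*} [NormedAddCommGroup E]
    [MeasurableSpace E] [BorelSpace E] [SecondCountableTopology E] [NormedAddCommGroup W]
    [NormedSpace ℝ W] {L p R : ℝ} {φ : E → W} (hφ : PolyLipschitzWith L (p - 1) φ) (hL : 0 ≤ L)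
    (hp : 1 ≤ p) (hR : 0 ≤ R) {μ ν : Measure E} [IsProbabilityMeasure μ] [IsProbabilityMeasure ν]
    (hμ : ∫⁻ x, ‖x‖ₑ ^ p ∂μ ≤ ENNReal.ofReal (R ^ p))
    (hν : ∫⁻ x, ‖x‖ₑ ^ p ∂ν ≤ ENNReal.ofReal (R ^ p)) {π : Measure (E × E)}
    (hπ : IsCoupling π μ ν) (hc : transportCost p π ≠ ⊤) :
    ‖∫ x, φ x ∂μ - ∫ x, φ x ∂ν‖ ≤ L * (1 + 2 * R) ^ (p - 1) * (transportCost p π).toReal := by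
  have := hπ.isProbabilityMeasure
  have hint₁ : Integrable (fun z : E × E => φ z.1) π :=
    (hπ.map_fst ▸ hφ.integrable hL hp hR hμ).comp_measurable measurable_fst
  have hint₂ : Integrable (fun z : E × E => φ z.2) π :=
    (hπ.map_snd ▸ hφ.integrable hL hp hR hν).comp_measurable measurable_snd
  have hsplit : ∫ x, φ x ∂μ - ∫ x, φ x ∂ν = ∫ z, (φ z.1 - φ z.2) ∂π := by
    rw [integral_sub hint₁ hint₂, ← hπ.map_fst, ← hπ.map_snd,
      integral_map measurable_fst.aemeasurable hφ.continuous.aestronglyMeasurable,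
      integral_map measurable_snd.aemeasurable hφ.continuous.aestronglyMeasurable]
  rw [hsplit]
  refine norm_integral_le_of_lintegral_enorm_le (by positivity) ?_
  rw [ENNReal.ofReal_mul (by positivity), ENNReal.ofReal_toReal hc]
  exact hφ.lintegral_enorm_sub_le hL π measurable_fst.aemeasurable measurable_snd.aemeasurable
    (continuous_fst.sub continuous_snd).aemeasurable hp hR
    (by rwa [hπ.lintegral_fst (measurable_enorm.pow_const p)])
    (by rwa [hπ.lintegral_snd (measurable_enorm.pow_const p)])

theorem le_mul_Wp {d : ℕ} {p : ℝ} {μ ν : Measure (Rd d)} {a C : ℝ} (hC : 0 < C)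
    (hfin : ∃ π, IsCoupling π μ ν ∧ transportCost p π ≠ ⊤)
    (h : ∀ π, IsCoupling π μ ν → transportCost p π ≠ ⊤ → a ≤ C * (transportCost p π).toReal) :
    a ≤ C * Wp p μ ν := by
  obtain ⟨π₀, hπ₀, hc₀⟩ := hfin
  rw [← div_le_iff₀' hC, Wp, ← ENNReal.ofReal_le_iff_le_toReal]
  · refine le_sInf ?_
    rintro _ ⟨π, hπ₁, hπ₂, rfl⟩
    change ENNReal.ofReal (a / C) ≤ transportCost p π
    rcases eq_or_ne (transportCost p π) ⊤ with hc | hc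
    · simp [hc]
    · rw [ENNReal.ofReal_le_iff_le_toReal hc, div_le_iff₀' hC]
      exact h π ⟨hπ₁, hπ₂⟩ hc
  · exact ne_top_of_le_ne_top hc₀ (sInf_le ⟨π₀, hπ₀.map_fst, hπ₀.map_snd, rfl⟩)

section LowerBound

variable {E : Type*} [NormedAddCommGroup E] [MeasurableSpace E] [OpensMeasurableSpace E]

theorem half_le_measureReal_ball {μ : Measure E} [IsProbabilityMeasure μ] {p R : ℝ} (hp : 1 ≤ p)
    (hR : 0 < R) (hμ : ∫⁻ x, ‖x‖ₑ ^ p ∂μ ≤ ENNReal.ofReal (R ^ p)) :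
    1 / 2 ≤ μ.real (Metric.ball 0 (2 * R)) := by
  have hp0 : 0 < p := by positivity
  set S := {x : E | 2 * R ≤ ‖x‖}
  have hmarkov : ENNReal.ofReal ((2 * R) ^ p) * μ S ≤ ENNReal.ofReal (R ^ p) := by
    refine le_trans ?_
      ((mul_meas_ge_le_lintegral₀ (measurable_enorm.pow_const p).aemeasurable
        (ENNReal.ofReal ((2 * R) ^ p))).trans hμ)
    gcongr
    intro x hx
    rw [Set.mem_ofPred_eq, ← ofReal_norm, ENNReal.ofReal_rpow_of_nonneg (norm_nonneg _) hp0.le]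
    exact ENNReal.ofReal_le_ofReal (Real.rpow_le_rpow (by positivity) hx hp0.le)
  have hreal : (2 * R) ^ p * μ.real S ≤ R ^ p := by
    have := ENNReal.toReal_mono ENNReal.ofReal_ne_top hmarkov
    rwa [ENNReal.toReal_mul, ENNReal.toReal_ofReal (by positivity),
      ENNReal.toReal_ofReal (by positivity)] at this
  have htwo : 2 * R ^ p ≤ (2 * R) ^ p := by
    rw [Real.mul_rpow zero_le_two hR.le]
    gcongr
    simpa using Real.rpow_le_rpow_of_exponent_le one_le_two hp
  have hball : Metric.ball (0 : E) (2 * R) = Sᶜ := by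
    ext x
    simp [S]
  rw [hball, probReal_compl_eq_one_sub (measurableSet_le measurable_const measurable_norm)]
  nlinarith [measureReal_nonneg (μ := μ) (s := S), Real.rpow_pos_of_pos hR p]

theorem exists_pos_le_integral_of_moment_le [ProperSpace E] {h : E → ℝ} (hcont : Continuous h)
    (hpos : ∀ x, 0 < h x) {p R : ℝ} (hp : 1 ≤ p) (hR : 0 < R) :
    ∃ m > 0, ∀ (μ : Measure E) [IsProbabilityMeasure μ],
      ∫⁻ x, ‖x‖ₑ ^ p ∂μ ≤ ENNReal.ofReal (R ^ p) → Integrable h μ → m ≤ ∫ x, h x ∂μ := by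
  obtain ⟨x₀, -, hx₀⟩ := (isCompact_closedBall (0 : E) (2 * R)).exists_isMinOn
    (Metric.nonempty_closedBall.2 (by positivity)) hcont.continuousOn
  refine ⟨h x₀ / 2, by linarith [hpos x₀], fun μ _ hμ hint => ?_⟩
  calc h x₀ / 2 ≤ h x₀ * μ.real (Metric.ball 0 (2 * R)) := by
        nlinarith [half_le_measureReal_ball hp hR hμ, hpos x₀]
    _ ≤ ∫ x in Metric.ball 0 (2 * R), h x ∂μ :=
        setIntegral_ge_of_const_le_real Metric.isOpen_ball.measurableSet (measure_ne_top _ _)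
          (fun x hx => hx₀ (Metric.ball_subset_closedBall hx)) hint.integrableOn
    _ ≤ ∫ x, h x ∂μ := setIntegral_le_integral hint (ae_of_all _ fun x => (hpos x).le)

end LowerBound

theorem norm_inv_smul_sub_inv_smul_le {W : Type*} [NormedAddCommGroup W] [NormedSpace ℝ W]
    {a c : W} {b e m G : ℝ} (hm : 0 < m) (hb : m ≤ b) (he : m ≤ e) (hc : ‖c‖ ≤ G) :
    ‖b⁻¹ • a - e⁻¹ • c‖ ≤ m⁻¹ * ‖a - c‖ + G / m ^ 2 * |b - e| := by
  have hb0 : 0 < b := hm.trans_le hb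
  have he0 : 0 < e := hm.trans_le he
  have hsplit : b⁻¹ • a - e⁻¹ • c = b⁻¹ • (a - c) + (b⁻¹ - e⁻¹) • c := by
    rw [smul_sub, sub_smul]
    abel
  have hinv : |b⁻¹ - e⁻¹| ≤ |b - e| / m ^ 2 := by
    rw [inv_sub_inv hb0.ne' he0.ne', abs_div, abs_sub_comm, abs_of_pos (mul_pos hb0 he0)]
    gcongr
    nlinarith
  calc ‖b⁻¹ • a - e⁻¹ • c‖ ≤ ‖b⁻¹ • (a - c)‖ + ‖(b⁻¹ - e⁻¹) • c‖ := hsplit ▸ norm_add_le _ _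
    _ = b⁻¹ * ‖a - c‖ + |b⁻¹ - e⁻¹| * ‖c‖ := by
        rw [norm_smul, norm_smul, Real.norm_of_nonneg (inv_pos.2 hb0).le, Real.norm_eq_abs]
    _ ≤ m⁻¹ * ‖a - c‖ + |b - e| / m ^ 2 * G := by gcongr
    _ = m⁻¹ * ‖a - c‖ + G / m ^ 2 * |b - e| := by ring

/-- **Stability estimate for ratios of integrals.**
Let `V` be a finite-dimensional real normed vector space and `g : ℝ^d → V`,
`h : ℝ^d → (0, ∞)` satisfy `max ‖g x - g y‖ |h x - h y| ≤ L (1 + |x| + |y|)^ς |x - y|`.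
Then for all `p ≥ ς + 1` and `R > 0` there is `C > 0` such that for all
`μ, ν ∈ P_{p,R}(ℝ^d)`,
`‖(∫ g dμ)/(∫ h dμ) - (∫ g dν)/(∫ h dν)‖ ≤ C W_p(μ, ν)`. -/
theorem ratio_integral_stability
    {V : Type} [NormedAddCommGroup V] [NormedSpace ℝ V] [FiniteDimensional ℝ V]
    (d : ℕ) (g : Rd d → V) (h : Rd d → ℝ) (hpos : ∀ x, 0 < h x)
    (ς L : ℝ) (hς : 0 ≤ ς) (hL : 0 < L)
    (hlip : ∀ x y : Rd d, max ‖g x - g y‖ |h x - h y| ≤ L * (1 + ‖x‖ + ‖y‖) ^ ς * ‖x - y‖)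
    (p : ℝ) (hp : ς + 1 ≤ p) (R : ℝ) (hR : 0 < R) :
    ∃ C > 0, ∀ μ ν : Measure (Rd d),
      IsProbabilityMeasure μ → IsProbabilityMeasure ν →
      MomLE p R μ → MomLE p R ν →
      ‖(∫ x, h x ∂μ)⁻¹ • (∫ x, g x ∂μ) - (∫ x, h x ∂ν)⁻¹ • (∫ x, g x ∂ν)‖
        ≤ C * Wp p μ ν := by
  have hp1 : 1 ≤ p := by linarith
  have hg : PolyLipschitzWith L (p - 1) g :=
    PolyLipschitzWith.mono_exponent (fun x y => (le_max_left _ _).trans (hlip x y)) hL.le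
      (by linarith)
  have hh : PolyLipschitzWith L (p - 1) h :=
    PolyLipschitzWith.mono_exponent (fun x y => (le_max_right _ _).trans (hlip x y)) hL.le
      (by linarith)
  obtain ⟨m, hm, hm_le⟩ := exists_pos_le_integral_of_moment_le hh.continuous hpos hp1 hR
  set K := L * (1 + 2 * R) ^ (p - 1)
  set G := ‖g 0‖ + K * R
  refine ⟨(m⁻¹ + G / m ^ 2) * K, by positivity, fun μ ν _ _ hμ hν => ?_⟩
  refine le_mul_Wp (by positivity) ⟨μ.prod ν, IsCoupling.prod μ ν, ?_⟩ fun π hπ hc => ?_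
  · exact ne_top_of_le_ne_top ENNReal.ofReal_ne_top
      ((IsCoupling.prod μ ν).transportCost_le hp1 hR.le hμ hν)
  calc _ ≤ m⁻¹ * ‖∫ x, g x ∂μ - ∫ x, g x ∂ν‖ + G / m ^ 2 * |∫ x, h x ∂μ - ∫ x, h x ∂ν| :=
        norm_inv_smul_sub_inv_smul_le hm (hm_le μ hμ (hh.integrable hL.le hp1 hR.le hμ))
          (hm_le ν hν (hh.integrable hL.le hp1 hR.le hν)) (hg.norm_integral_le hL.le hp1 hR.le hν)
    _ ≤ m⁻¹ * (K * (transportCost p π).toReal) + G / m ^ 2 * (K * (transportCost p π).toReal) := by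
        gcongr
        · exact hg.norm_integral_sub_le hL.le hp1 hR.le hμ hν hπ hc
        · exact hh.norm_integral_sub_le hL.le hp1 hR.le hμ hν hπ hc
    _ = (m⁻¹ + G / m ^ 2) * K * (transportCost p π).toReal := by ring

end
end

section
/- For all p, q, β > 0 and every Borel probability measure ν on [0, ∞) with ∫ y^q ν(dy) < ∞, it holds that (∫ y^p e^{−β y} ν(dy)) / (∫ e^{−β y} ν(dy)) ≤ C(p, q, β) · (1 + ∫ y^q ν(dy))^{p/q}, where C(p, q, β) := (1 − 2^{−q})^{−1} (p/β)^p e^{2β − p}. -/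
/-!
Put `R = (1 + ∫ y^q dν)^{1/q} ≥ 1`, so that Markov's inequality gives `ν [2R, ∞) ≤ 2^{-q}`.
Writing `y = R · (y / R)` and using `z^p e^{-βz} ≤ (p/β)^p e^{-p}` at `z = y / R` bounds the
numerator by `R^p (p/β)^p e^{-p} ∫ e^{-β (1 - 1/R) y} dν`. On `[0, 2R)` this integrand is at most
`e^{2β} e^{-βy}`, and on `[2R, ∞)` at most `e^{2β} e^{-2βR}`; the tail term is absorbed into the
denominator because `∫ e^{-βy} dν ≥ e^{-2βR} ν [0, 2R) ≥ e^{-2βR} (1 - 2^{-q})`.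
-/

open MeasureTheory Real Set

/-- The maximum of `z ↦ z ^ p * exp (-β * z)` on `[0, ∞)`, attained at `z = p / β`. -/
lemma rpow_mul_exp_neg_mul_le {p β z : ℝ} (hp : 0 < p) (hβ : 0 < β) (hz : 0 ≤ z) :
    z ^ p * exp (-β * z) ≤ (p / β) ^ p * exp (-p) := by
  set u := β * z / p with hu_def
  have hu : 0 ≤ u := by positivity
  have hzu : z = p / β * u := by rw [hu_def]; field_simp
  have hup : u ^ p ≤ exp (β * z - p) := calc
    u ^ p ≤ exp (u - 1) ^ p := rpow_le_rpow hu (by linarith [add_one_le_exp (u - 1)]) hp.le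
    _ = exp (β * z - p) := by rw [← exp_mul]; congr 1; rw [hu_def]; field_simp
  calc z ^ p * exp (-β * z) = (p / β) ^ p * (u ^ p * exp (-β * z)) := by
        rw [← mul_assoc, ← mul_rpow (by positivity) hu, ← hzu]
    _ ≤ (p / β) ^ p * (exp (β * z - p) * exp (-β * z)) := by gcongr
    _ = (p / β) ^ p * exp (-p) := by rw [← exp_add]; ring_nf

section HalfLine

variable {ν : Measure ℝ} (hν : ∀ᵐ y ∂ν, 0 ≤ y)
include hν

lemma integrable_exp_neg_mul [IsFiniteMeasure ν] {γ : ℝ} (hγ : 0 ≤ γ) :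
    Integrable (fun y => exp (-γ * y)) ν := by
  refine Integrable.of_bound (by fun_prop) 1 ?_
  filter_upwards [hν] with y hy
  rw [norm_of_nonneg (exp_pos _).le, exp_le_one_iff]
  nlinarith

lemma integrable_rpow_mul_exp_neg_mul [IsFiniteMeasure ν] {p β : ℝ} (hp : 0 < p) (hβ : 0 < β) :
    Integrable (fun y => y ^ p * exp (-β * y)) ν := by
  refine Integrable.of_bound (by fun_prop) ((p / β) ^ p * exp (-p)) ?_
  filter_upwards [hν] with y hy
  rw [norm_of_nonneg (by positivity)]
  exact rpow_mul_exp_neg_mul_le hp hβ hy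

lemma exp_neg_mul_mul_one_sub_measureReal_le_integral [IsProbabilityMeasure ν] {β : ℝ}
    (hβ : 0 ≤ β) (a : ℝ) :
    exp (-β * a) * (1 - ν.real {y | a ≤ y}) ≤ ∫ y, exp (-β * y) ∂ν := by
  have hlt : MeasurableSet {y : ℝ | y < a} := measurableSet_lt measurable_id measurable_const
  have hcompl : {y : ℝ | y < a} = {y | a ≤ y}ᶜ := by ext; simp
  have hint := integrable_exp_neg_mul hν hβ
  calc exp (-β * a) * (1 - ν.real {y | a ≤ y}) = exp (-β * a) * ν.real {y | y < a} := by
        rw [hcompl, probReal_compl_eq_one_sub (s := {y | a ≤ y}) measurableSet_Ici]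
    _ ≤ ∫ y in {y | y < a}, exp (-β * y) ∂ν :=
        setIntegral_ge_of_const_le_real hlt (measure_ne_top _ _)
          (fun y hy => exp_le_exp.2 (by nlinarith [hy.out])) hint.integrableOn
    _ ≤ ∫ y, exp (-β * y) ∂ν := setIntegral_le_integral hint (.of_forall fun _ => (exp_pos _).le)

lemma integral_rpow_mul_exp_neg_mul_le [IsFiniteMeasure ν] {p β R : ℝ} (hp : 0 < p) (hβ : 0 < β)
    (hR : 1 ≤ R) :
    ∫ y, y ^ p * exp (-β * y) ∂ν ≤
      R ^ p * ((p / β) ^ p * exp (-p)) * ∫ y, exp (-(β - β / R) * y) ∂ν := by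
  have hR0 : 0 < R := by linarith
  have hγ : 0 ≤ β - β / R := sub_nonneg.2 (div_le_self hβ.le hR)
  rw [← integral_const_mul]
  refine integral_mono_ae (integrable_rpow_mul_exp_neg_mul hν hp hβ)
    ((integrable_exp_neg_mul hν hγ).const_mul _) ?_
  filter_upwards [hν] with y hy
  have hsplit : exp (-β * y) = exp (-β * (y / R)) * exp (-(β - β / R) * y) := by
    rw [← exp_add]; congr 1; field_simp; ring
  calc y ^ p * exp (-β * y)
      = R ^ p * ((y / R) ^ p * exp (-β * (y / R))) * exp (-(β - β / R) * y) := by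
        rw [hsplit, div_rpow hy hR0.le]; field_simp
    _ ≤ R ^ p * ((p / β) ^ p * exp (-p)) * exp (-(β - β / R) * y) := by
        gcongr R ^ p * ?_ * _
        exact rpow_mul_exp_neg_mul_le hp hβ (by positivity)

lemma integral_exp_neg_mul_sub_div_le [IsFiniteMeasure ν] {β R : ℝ} (hβ : 0 < β) (hR : 1 ≤ R) :
    ∫ y, exp (-(β - β / R) * y) ∂ν ≤
      exp (2 * β) * ((∫ y, exp (-β * y) ∂ν) + exp (-β * (2 * R)) * ν.real {y | 2 * R ≤ y}) := by
  have hR0 : 0 < R := by linarith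
  have hγ : 0 ≤ β - β / R := sub_nonneg.2 (div_le_self hβ.le hR)
  set S := {y : ℝ | 2 * R ≤ y}
  have hS : MeasurableSet S := measurableSet_le measurable_const measurable_id
  have hint := integrable_exp_neg_mul hν hβ.le
  have hind : Integrable (S.indicator fun _ => exp (-β * (2 * R))) ν :=
    (integrable_const _).indicator hS
  have hmono : ∀ᵐ y ∂ν, exp (-(β - β / R) * y) ≤
      exp (2 * β) * exp (-β * y) + exp (2 * β) * S.indicator (fun _ => exp (-β * (2 * R))) y := by
    filter_upwards [hν] with y hy
    by_cases hyS : y ∈ S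
    · have hexp : exp (-(β - β / R) * y) ≤ exp (2 * β) * exp (-β * (2 * R)) := by
        rw [← exp_add, exp_le_exp]
        have hyR : 2 * R ≤ y := hyS
        have : (β - β / R) * (2 * R) = 2 * β * R - 2 * β := by field_simp
        nlinarith
      rw [indicator_of_mem hyS]
      linarith [mul_pos (exp_pos (2 * β)) (exp_pos (-β * y))]
    · rw [indicator_of_notMem hyS, mul_zero, add_zero, ← exp_add, exp_le_exp]
      have hyR : β * y / R ≤ 2 * β := by
        rw [div_le_iff₀ hR0]; nlinarith [show y < 2 * R from lt_of_not_ge hyS]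
      have : (β - β / R) * y = β * y - β * y / R := by ring
      linarith
  calc ∫ y, exp (-(β - β / R) * y) ∂ν
      ≤ ∫ y, (exp (2 * β) * exp (-β * y) +
          exp (2 * β) * S.indicator (fun _ => exp (-β * (2 * R))) y) ∂ν :=
        integral_mono_ae (integrable_exp_neg_mul hν hγ)
          ((hint.const_mul _).add (hind.const_mul _)) hmono
    _ = _ := by
        rw [integral_add (hint.const_mul _) (hind.const_mul _), integral_const_mul,
          integral_const_mul, integral_indicator_const _ hS, smul_eq_mul, ← mul_add,
          mul_comm (ν.real S)]

lemma measureReal_ge_le_integral_rpow_div [IsFiniteMeasure ν] {q a : ℝ} (hq : 0 < q) (ha : 0 < a)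
    (hint : Integrable (fun y => y ^ q) ν) :
    ν.real {y | a ≤ y} ≤ (∫ y, y ^ q ∂ν) / a ^ q := by
  rw [le_div_iff₀ (by positivity), mul_comm]
  calc a ^ q * ν.real {y | a ≤ y} ≤ a ^ q * ν.real {y | a ^ q ≤ y ^ q} := by
        gcongr a ^ q * ?_
        exact measureReal_mono fun y hy => rpow_le_rpow ha.le hy hq.le
    _ ≤ ∫ y, y ^ q ∂ν :=
        mul_meas_ge_le_integral_of_nonneg (hν.mono fun y hy => rpow_nonneg hy q) hint _

lemma measureReal_ge_two_mul_moment_rpow_le [IsFiniteMeasure ν] {q : ℝ} (hq : 0 < q)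
    (hint : Integrable (fun y => y ^ q) ν) :
    ν.real {y | 2 * (1 + ∫ y, y ^ q ∂ν) ^ q⁻¹ ≤ y} ≤ 2 ^ (-q) := by
  set M := ∫ y, y ^ q ∂ν
  have hM : 0 ≤ M := integral_nonneg_of_ae (hν.mono fun y hy => rpow_nonneg hy q)
  have hpow : (2 * (1 + M) ^ q⁻¹) ^ q = 2 ^ q * (1 + M) := by
    rw [mul_rpow zero_le_two (by positivity), ← rpow_mul (by linarith), inv_mul_cancel₀ hq.ne',
      rpow_one]
  calc ν.real {y | 2 * (1 + M) ^ q⁻¹ ≤ y} ≤ M / (2 ^ q * (1 + M)) := by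
        rw [← hpow]; exact measureReal_ge_le_integral_rpow_div hν hq (by positivity) hint
    _ ≤ (1 + M) / (2 ^ q * (1 + M)) := by gcongr; linarith
    _ = 2 ^ (-q) := by rw [rpow_neg zero_le_two]; field_simp

theorem integral_rpow_mul_exp_neg_mul_le_of_tail_le [IsProbabilityMeasure ν] {p β R t : ℝ}
    (hp : 0 < p) (hβ : 0 < β) (hR : 1 ≤ R) (htail : ν.real {y | 2 * R ≤ y} ≤ t) (ht : t < 1) :
    ∫ y, y ^ p * exp (-β * y) ∂ν ≤
      (1 - t)⁻¹ * (p / β) ^ p * exp (2 * β - p) * R ^ p * ∫ y, exp (-β * y) ∂ν := by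
  set D := ∫ y, exp (-β * y) ∂ν
  set s := ν.real {y | 2 * R ≤ y}
  set X := exp (-β * (2 * R))
  have hlow : X * (1 - s) ≤ D := exp_neg_mul_mul_one_sub_measureReal_le_integral hν hβ.le _
  have htail_le : D + X * s ≤ (1 - t)⁻¹ * D := by
    rw [le_inv_mul_iff₀ (by linarith)]
    have hs : 0 ≤ s := measureReal_nonneg
    nlinarith [mul_le_mul_of_nonneg_left htail (exp_pos (-β * (2 * R))).le,
      mul_le_mul_of_nonneg_left hlow (hs.trans htail)]
  calc ∫ y, y ^ p * exp (-β * y) ∂ν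
      ≤ R ^ p * ((p / β) ^ p * exp (-p)) * ∫ y, exp (-(β - β / R) * y) ∂ν :=
        integral_rpow_mul_exp_neg_mul_le hν hp hβ hR
    _ ≤ R ^ p * ((p / β) ^ p * exp (-p)) * (exp (2 * β) * (D + X * s)) := by
        gcongr; exact integral_exp_neg_mul_sub_div_le hν hβ hR
    _ ≤ R ^ p * ((p / β) ^ p * exp (-p)) * (exp (2 * β) * ((1 - t)⁻¹ * D)) := by gcongr
    _ = (1 - t)⁻¹ * (p / β) ^ p * exp (2 * β - p) * R ^ p * D := by
        rw [sub_eq_add_neg (2 * β), exp_add]; ring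

end HalfLine

/-- **Bound on exponentially reweighted moments on the half-line, with explicit constant.**
For every probability measure `ν` concentrated on `[0, ∞)` with finite `q`-th moment,
`(∫ y^p e^{-βy} dν) / (∫ e^{-βy} dν) ≤ C(p,q,β) (1 + ∫ y^q dν)^{p/q}` with
`C(p,q,β) = (1 - 2^{-q})⁻¹ (p/β)^p e^{2β - p}`. -/
theorem reweighted_moment_halfline_bound
    (p q β : ℝ) (hp : 0 < p) (hq : 0 < q) (hβ : 0 < β)
    (ν : Measure ℝ) (hprob : IsProbabilityMeasure ν)
    (hsupp : ∀ᵐ y ∂ν, 0 ≤ y)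
    (hmom : ∫⁻ y, ENNReal.ofReal (y ^ q) ∂ν < ⊤) :
    (∫ y, y ^ p * Real.exp (-β * y) ∂ν) / (∫ y, Real.exp (-β * y) ∂ν)
      ≤ ((1 - (2 : ℝ) ^ (-q))⁻¹ * (p / β) ^ p * Real.exp (2 * β - p)) *
        (1 + ∫ y, y ^ q ∂ν) ^ (p / q) := by
  have hqnonneg : ∀ᵐ y ∂ν, 0 ≤ y ^ q := hsupp.mono fun y hy => rpow_nonneg hy q
  have hint : Integrable (fun y => y ^ q) ν :=
    (lintegral_ofReal_ne_top_iff_integrable (by fun_prop) hqnonneg).1 hmom.ne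
  set M := ∫ y, y ^ q ∂ν
  have hM : 0 ≤ M := integral_nonneg_of_ae hqnonneg
  have hR : 1 ≤ (1 + M) ^ q⁻¹ := one_le_rpow (by linarith) (by positivity)
  have hRp : ((1 + M) ^ q⁻¹) ^ p = (1 + M) ^ (p / q) := by
    rw [← rpow_mul (by linarith), inv_mul_eq_div]
  have ht : (2 : ℝ) ^ (-q) < 1 := rpow_lt_one_of_one_lt_of_neg one_lt_two (neg_lt_zero.2 hq)
  have hD : 0 < ∫ y, exp (-β * y) ∂ν := integral_exp_pos (integrable_exp_neg_mul hsupp hβ.le)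
  rw [div_le_iff₀ hD, ← hRp]
  exact integral_rpow_mul_exp_neg_mul_le_of_tail_le hsupp hp hβ hR
    (measureReal_ge_two_mul_moment_rpow_le hsupp hq hint) ht
end

section
/- Fix β > 0 and d ≥ 1. Suppose f : ℝ^d → ℝ is bounded from below by f_* = inf f and there are real numbers u ≥ ℓ > 0 and positive constants c_u, C_u, c_ℓ, C_ℓ such that c_ℓ |x|^ℓ − C_ℓ ≤ f(x) − f_* ≤ c_u |x|^u + C_u for all x ∈ ℝ^d. Then for all p, q > 0 there exist constants C_1, C_2 > 0, depending only on p, q, β, u, ℓ, c_u, C_u, c_ℓ, C_ℓ, such that for every Borel probability measure μ on ℝ^d with ∫ |x|^q μ(dx) < ∞, (∫ |x|^p e^{−β f(x)} μ(dx)) / (∫ e^{−β f(x)} μ(dx)) ≤ (C_1 + C_2 ∫ |x|^q μ(dx))^{pu/(qℓ)}. -/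
open MeasureTheory ENNReal
open scoped NNReal

noncomputable section

/-! By Markov's inequality the ball of radius `r = (2m + 1)^{1/q}`, `m = ∫ |x|^q dμ`, carries
half of the mass of `μ`, and on it the upper growth bound gives
`e^{-βf} ≥ a := e^{-βf_*} e^{-β(c_u r^u + C_u)}`, so the denominator is at least `a / 2`.
The lower growth bound makes `|x|^p e^{-βf}` smaller than `a / 2` beyond a radius `R ≍ r^{u/ℓ}`;
splitting the numerator at `R` bounds the ratio by `R^p + 1 ≲ (1 + m)^{pu/(qℓ)}`. -/

open Metric Real

namespace Real

theorem rpow_le_rpow_mul_exp {s k : ℝ} (hs : 0 ≤ s) (hk : 0 < k) :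
    s ^ k ≤ k ^ k * exp s := by
  have hsk : s / k ≤ exp (s / k) := by linarith [add_one_le_exp (s / k)]
  have : (s / k) ^ k ≤ exp s := by
    calc (s / k) ^ k ≤ exp (s / k) ^ k := by gcongr
      _ = exp s := by rw [← exp_mul, div_mul_cancel₀ s hk.ne']
  rw [div_rpow hs hk.le, div_le_iff₀ (by positivity)] at this
  linarith

theorem rpow_mul_exp_neg_le {t p ℓ b : ℝ} (ht : 0 ≤ t) (hp : 0 < p) (hℓ : 0 < ℓ) (hb : 0 < b) :
    t ^ p * exp (-b * t ^ ℓ) ≤ (2 * p / (ℓ * b)) ^ (p / ℓ) * exp (-(b / 2) * t ^ ℓ) := by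
  set s := b / 2 * t ^ ℓ with hs
  have hts : t ^ p ≤ (2 * p / (ℓ * b)) ^ (p / ℓ) * exp s := by
    have key := rpow_le_rpow_mul_exp (s := s) (k := p / ℓ) (by positivity) (by positivity)
    rw [mul_rpow (by positivity) (by positivity), ← rpow_mul ht, mul_div_cancel₀ p hℓ.ne',
      mul_comm, ← le_div_iff₀ (by positivity)] at key
    have hK : (2 * p / (ℓ * b)) ^ (p / ℓ) = (p / ℓ) ^ (p / ℓ) / (b / 2) ^ (p / ℓ) := by
      rw [← div_rpow (by positivity) (by positivity)]
      congr 1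
      field_simp
    rwa [hK, div_mul_eq_mul_div]
  calc t ^ p * exp (-b * t ^ ℓ) ≤ (2 * p / (ℓ * b)) ^ (p / ℓ) * exp s * exp (-b * t ^ ℓ) := by
        gcongr
    _ = (2 * p / (ℓ * b)) ^ (p / ℓ) * exp (-(b / 2) * t ^ ℓ) := by
        rw [mul_assoc, ← exp_add]
        congr 2
        rw [hs]
        ring

theorem rpow_mul_add_one_le {b s e : ℝ} (hb : 0 ≤ b) (hs : 1 ≤ s) (he : 0 < e) :
    b * s ^ e + 1 ≤ ((b + 1) ^ (1 / e) * s) ^ e := by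
  rw [mul_rpow (by positivity) (by positivity), ← rpow_mul (by positivity),
    one_div_mul_cancel he.ne', Real.rpow_one]
  nlinarith [one_le_rpow hs he.le]

end Real

theorem exists_rpow_mul_exp_neg_le {β cl ℓ u p : ℝ} (hβ : 0 < β) (hcl : 0 < cl) (hℓ : 0 < ℓ)
    (hu : 0 ≤ u) (hp : 0 < p) {cu : ℝ} (hcu : 0 ≤ cu) (Cl Cu : ℝ) :
    ∃ D ≥ 0, ∀ r ≥ 1, ∀ t, D * r ^ (u / ℓ) < t →
      t ^ p * exp (-β * (cl * t ^ ℓ - Cl)) ≤ exp (-β * (cu * r ^ u + Cu)) / 2 := by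
  -- `D` makes `(β cl / 2) t^ℓ ≥ M + β cu r^u`, and `M ≤ e^M` absorbs the constants in `M`.
  set K := (2 * p / (ℓ * (β * cl))) ^ (p / ℓ)
  set M := 2 * K * exp (β * (Cl + Cu))
  have hM : 0 < M := by positivity
  refine ⟨(2 * (M + β * cu) / (β * cl)) ^ (1 / ℓ), by positivity, fun r hr t ht => ?_⟩
  have hr0 : 0 ≤ r ^ (u / ℓ) := by positivity
  have ht0 : 0 ≤ t := (mul_nonneg (by positivity) hr0).trans ht.le
  have hrt : 2 * (M + β * cu) / (β * cl) * r ^ u ≤ t ^ ℓ := by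
    have := rpow_le_rpow (by positivity) ht.le hℓ.le
    rwa [mul_rpow (by positivity) hr0, ← rpow_mul (by positivity), ← rpow_mul (by positivity),
      one_div_mul_cancel hℓ.ne', div_mul_cancel₀ u hℓ.ne', Real.rpow_one] at this
  have hexpo : M + β * cu * r ^ u ≤ β * cl / 2 * t ^ ℓ := by
    have hru : 1 ≤ r ^ u := one_le_rpow hr hu
    have : (M + β * cu) * r ^ u ≤ β * cl / 2 * t ^ ℓ := by
      rw [div_mul_eq_mul_div, div_le_iff₀ (by positivity)] at hrt
      linarith
    nlinarith
  have hKM : K * exp (-M) ≤ exp (-β * (Cl + Cu)) / 2 := by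
    calc K * exp (-M) = K / exp M := by rw [exp_neg, div_eq_mul_inv]
      _ ≤ K / M := by gcongr; linarith [add_one_le_exp M]
      _ = exp (-β * (Cl + Cu)) / 2 := by
        rw [neg_mul, exp_neg]
        field_simp
        ring
  calc t ^ p * exp (-β * (cl * t ^ ℓ - Cl))
      = exp (β * Cl) * (t ^ p * exp (-(β * cl) * t ^ ℓ)) := by
        rw [mul_left_comm, ← exp_add]; ring_nf
    _ ≤ exp (β * Cl) * (K * exp (-(β * cl / 2) * t ^ ℓ)) :=
        mul_le_mul_of_nonneg_left (rpow_mul_exp_neg_le ht0 hp hℓ (by positivity))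
          (exp_pos _).le
    _ ≤ exp (β * Cl) * (K * exp (-(M + β * cu * r ^ u))) := by
        gcongr
        linarith
    _ = K * exp (-M) * exp (β * Cl - β * cu * r ^ u) := by
        rw [mul_left_comm, mul_assoc K, ← exp_add, ← exp_add]; ring_nf
    _ ≤ exp (-β * (Cl + Cu)) / 2 * exp (β * Cl - β * cu * r ^ u) := by gcongr
    _ = exp (-β * (cu * r ^ u + Cu)) / 2 := by
        rw [div_mul_eq_mul_div, ← exp_add]; ring_nf

theorem coe_nnnorm_rpow_eq_ofReal {E : Type*} [NormedAddCommGroup E] (x : E) {p : ℝ} (hp : 0 ≤ p) :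
    (‖x‖₊ : ℝ≥0∞) ^ p = ENNReal.ofReal (‖x‖ ^ p) := by
  rw [← ofReal_coe_nnreal, coe_nnnorm, ofReal_rpow_of_nonneg (norm_nonneg x) hp]

section ProbabilityMeasure

variable {E : Type*} [NormedAddCommGroup E] [MeasurableSpace E] [OpensMeasurableSpace E]
  {μ : Measure E} [IsProbabilityMeasure μ]

theorem lintegral_rpow_nnnorm_mul_div_le_of_tail {p R : ℝ} (hp : 0 ≤ p) {w : E → ℝ≥0∞}
    {c : ℝ≥0∞} (htail : ∀ x, R < ‖x‖ → (‖x‖₊ : ℝ≥0∞) ^ p * w x ≤ c)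
    (hc : c ≤ ∫⁻ x, w x ∂μ) :
    (∫⁻ x, (‖x‖₊ : ℝ≥0∞) ^ p * w x ∂μ) / (∫⁻ x, w x ∂μ) ≤ ENNReal.ofReal (R ^ p) + 1 := by
  refine ENNReal.div_le_of_le_mul ?_
  have hball : ∫⁻ x in closedBall 0 R, (‖x‖₊ : ℝ≥0∞) ^ p * w x ∂μ
      ≤ ENNReal.ofReal (R ^ p) * ∫⁻ x, w x ∂μ := by
    calc ∫⁻ x in closedBall 0 R, (‖x‖₊ : ℝ≥0∞) ^ p * w x ∂μ
        ≤ ∫⁻ x in closedBall 0 R, ENNReal.ofReal (R ^ p) * w x ∂μ := by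
          refine setLIntegral_mono' measurableSet_closedBall fun x hx => ?_
          rw [mem_closedBall_zero_iff] at hx
          gcongr
          rw [coe_nnnorm_rpow_eq_ofReal x hp]
          exact ofReal_le_ofReal (by gcongr)
      _ ≤ ∫⁻ x, ENNReal.ofReal (R ^ p) * w x ∂μ := setLIntegral_le_lintegral _ _
      _ = ENNReal.ofReal (R ^ p) * ∫⁻ x, w x ∂μ := lintegral_const_mul' _ _ ofReal_ne_top
  have hout : ∫⁻ x in (closedBall 0 R)ᶜ, (‖x‖₊ : ℝ≥0∞) ^ p * w x ∂μ ≤ c := by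
    calc ∫⁻ x in (closedBall 0 R)ᶜ, (‖x‖₊ : ℝ≥0∞) ^ p * w x ∂μ
        ≤ ∫⁻ x in (closedBall 0 R)ᶜ, c ∂μ :=
          setLIntegral_mono' measurableSet_closedBall.compl fun x hx =>
            htail x (by simpa using hx)
      _ = c * μ (closedBall 0 R)ᶜ := setLIntegral_const _ _
      _ ≤ c := mul_le_of_le_one_right' prob_le_one
  calc ∫⁻ x, (‖x‖₊ : ℝ≥0∞) ^ p * w x ∂μ
      = ∫⁻ x in closedBall 0 R, (‖x‖₊ : ℝ≥0∞) ^ p * w x ∂μ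
        + ∫⁻ x in (closedBall 0 R)ᶜ, (‖x‖₊ : ℝ≥0∞) ^ p * w x ∂μ :=
        (lintegral_add_compl _ measurableSet_closedBall).symm
    _ ≤ ENNReal.ofReal (R ^ p) * ∫⁻ x, w x ∂μ + ∫⁻ x, w x ∂μ := add_le_add hball (hout.trans hc)
    _ = (ENNReal.ofReal (R ^ p) + 1) * ∫⁻ x, w x ∂μ := by ring

theorem measure_closedBall_ge_half {q r : ℝ} (hq : 0 < q) (hr : 0 < r)
    (hmom : 2 * ∫⁻ x, (‖x‖₊ : ℝ≥0∞) ^ q ∂μ ≤ ENNReal.ofReal (r ^ q)) :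
    2⁻¹ ≤ μ (closedBall 0 r) := by
  have hrq : ENNReal.ofReal (r ^ q) ≠ 0 := (ofReal_pos.2 (by positivity)).ne'
  have hcompl : μ (closedBall 0 r)ᶜ ≤ 2⁻¹ := by
    calc μ (closedBall 0 r)ᶜ ≤ μ {x | ENNReal.ofReal (r ^ q) ≤ (‖x‖₊ : ℝ≥0∞) ^ q} := by
          refine measure_mono fun x hx => ?_
          rw [Set.mem_compl_iff, mem_closedBall_zero_iff, not_le] at hx
          rw [Set.mem_ofPred_eq, coe_nnnorm_rpow_eq_ofReal x hq.le]
          exact ofReal_le_ofReal (by gcongr)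
      _ ≤ (∫⁻ x, (‖x‖₊ : ℝ≥0∞) ^ q ∂μ) / ENNReal.ofReal (r ^ q) :=
          meas_ge_le_lintegral_div (by fun_prop) hrq ofReal_ne_top
      _ ≤ 2⁻¹ := by
          rw [ENNReal.div_le_iff hrq ofReal_ne_top, mul_comm, ← div_eq_mul_inv,
            ENNReal.le_div_iff_mul_le (by simp) (by simp), mul_comm]
          exact hmom
  rw [prob_compl_eq_one_sub measurableSet_closedBall] at hcompl
  calc 2⁻¹ = 1 - 2⁻¹ := one_sub_inv_two.symm
    _ ≤ 1 - (1 - μ (closedBall 0 r)) := tsub_le_tsub_left hcompl 1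
    _ = μ (closedBall 0 r) := ENNReal.sub_sub_cancel one_ne_top prob_le_one

theorem lintegral_rpow_nnnorm_mul_exp_div_le {f : E → ℝ} {β F cl Cl cu Cu ℓ u p r R : ℝ}
    (hβ : 0 ≤ β) (hcu : 0 ≤ cu) (hu : 0 ≤ u) (hp : 0 ≤ p)
    (hlow : ∀ x, cl * ‖x‖ ^ ℓ - Cl ≤ f x - F) (hupp : ∀ x, f x - F ≤ cu * ‖x‖ ^ u + Cu)
    (hball : 2⁻¹ ≤ μ (closedBall 0 r))
    (htail : ∀ t, R < t →
      t ^ p * exp (-β * (cl * t ^ ℓ - Cl)) ≤ exp (-β * (cu * r ^ u + Cu)) / 2) :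
    (∫⁻ x, (‖x‖₊ : ℝ≥0∞) ^ p * ENNReal.ofReal (exp (-β * f x)) ∂μ) /
        (∫⁻ x, ENNReal.ofReal (exp (-β * f x)) ∂μ) ≤ ENNReal.ofReal (R ^ p) + 1 := by
  set a := exp (-β * F) * exp (-β * (cu * r ^ u + Cu))
  have hexp (x : E) : exp (-β * f x) = exp (-β * F) * exp (-β * (f x - F)) := by
    rw [← exp_add]; ring_nf
  refine lintegral_rpow_nnnorm_mul_div_le_of_tail hp (c := ENNReal.ofReal (a / 2)) ?_ ?_
  · intro x hx
    rw [coe_nnnorm_rpow_eq_ofReal x hp, ← ofReal_mul (by positivity)]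
    refine ofReal_le_ofReal ?_
    calc ‖x‖ ^ p * exp (-β * f x) = exp (-β * F) * (‖x‖ ^ p * exp (-β * (f x - F))) := by
          rw [hexp]; ring
      _ ≤ exp (-β * F) * (‖x‖ ^ p * exp (-β * (cl * ‖x‖ ^ ℓ - Cl))) := by
          gcongr exp (-β * F) * (‖x‖ ^ p * exp ?_)
          exact mul_le_mul_of_nonpos_left (hlow x) (by linarith)
      _ ≤ exp (-β * F) * (exp (-β * (cu * r ^ u + Cu)) / 2) := by
          gcongr
          exact htail _ hx
      _ = a / 2 := by ring
  · calc ENNReal.ofReal (a / 2) ≤ ENNReal.ofReal a * μ (closedBall 0 r) := by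
          rw [ofReal_div_of_pos two_pos, ofReal_ofNat, div_eq_mul_inv]
          gcongr
      _ = ∫⁻ _ in closedBall 0 r, ENNReal.ofReal a ∂μ := (setLIntegral_const _ _).symm
      _ ≤ ∫⁻ x in closedBall 0 r, ENNReal.ofReal (exp (-β * f x)) ∂μ := by
          refine setLIntegral_mono' measurableSet_closedBall fun x hx => ofReal_le_ofReal ?_
          rw [mem_closedBall_zero_iff] at hx
          rw [hexp]
          gcongr exp (-β * F) * exp ?_
          refine mul_le_mul_of_nonpos_left ((hupp x).trans ?_) (by linarith)
          gcongr
      _ ≤ ∫⁻ x, ENNReal.ofReal (exp (-β * f x)) ∂μ := setLIntegral_le_lintegral _ _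

end ProbabilityMeasure

theorem weighted_moment_growth_bound_general
    (β : ℝ) (hβ : 0 < β) (d : ℕ)
    (u ℓ : ℝ) (hℓ : 0 < ℓ) (hℓu : ℓ ≤ u)
    (cu Cu cl Cl : ℝ) (hcu : 0 < cu) (hcl : 0 < cl)
    (p q : ℝ) (hp : 0 < p) (hq : 0 < q) :
    ∃ C1 > 0, ∃ C2 > 0, ∀ f : Rd d → ℝ, Measurable f → BddBelow (Set.range f) →
      (∀ x : Rd d, cl * ‖x‖ ^ ℓ - Cl ≤ f x - fStar f) →
      (∀ x : Rd d, f x - fStar f ≤ cu * ‖x‖ ^ u + Cu) →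
      ∀ μ : Measure (Rd d), IsProbabilityMeasure μ → MomFin q μ →
        (∫⁻ x, (‖x‖₊ : ℝ≥0∞) ^ p * ENNReal.ofReal (Real.exp (-β * f x)) ∂μ) /
            (∫⁻ x, ENNReal.ofReal (Real.exp (-β * f x)) ∂μ)
          ≤ ENNReal.ofReal
              ((C1 + C2 * (∫⁻ x, (‖x‖₊ : ℝ≥0∞) ^ q ∂μ).toReal) ^ (p * u / (q * ℓ))) := by
  have hu : 0 < u := hℓ.trans_le hℓu
  obtain ⟨D, hD, htail⟩ := exists_rpow_mul_exp_neg_le hβ hcl hℓ hu.le hp hcu.le Cl Cu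
  set e := p * u / (q * ℓ) with he_def
  have he : 0 < e := by positivity
  set γ := (D ^ p + 1) ^ (1 / e)
  have hγ : 0 < γ := rpow_pos_of_pos (by linarith [rpow_nonneg hD p]) _
  refine ⟨γ, hγ, 2 * γ, by positivity, fun f _ _ hlow hupp μ _ hmom => ?_⟩
  set m := (∫⁻ x, (‖x‖₊ : ℝ≥0∞) ^ q ∂μ).toReal
  set r := (2 * m + 1) ^ (1 / q)
  have hs : 1 ≤ 2 * m + 1 := by linarith [toReal_nonneg (a := ∫⁻ x, (‖x‖₊ : ℝ≥0∞) ^ q ∂μ)]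
  have hr : 1 ≤ r := one_le_rpow hs (by positivity)
  have hball : 2⁻¹ ≤ μ (closedBall 0 r) := by
    refine measure_closedBall_ge_half hq (by positivity) ?_
    rw [← ofReal_toReal hmom.ne, ← rpow_mul (by positivity), one_div_mul_cancel hq.ne',
      Real.rpow_one]
    calc 2 * ENNReal.ofReal m = ENNReal.ofReal (2 * m) := by
          rw [ofReal_mul zero_le_two, ofReal_ofNat]
      _ ≤ ENNReal.ofReal (2 * m + 1) := ofReal_le_ofReal (by linarith)
  have hRp : (D * r ^ (u / ℓ)) ^ p = D ^ p * (2 * m + 1) ^ e := by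
    rw [mul_rpow hD (by positivity), ← rpow_mul (by positivity), ← rpow_mul (by positivity)]
    congr 2
    rw [he_def]
    field_simp
  calc _ ≤ ENNReal.ofReal ((D * r ^ (u / ℓ)) ^ p) + 1 :=
        lintegral_rpow_nnnorm_mul_exp_div_le hβ.le hcu.le hu.le hp.le hlow hupp hball (htail r hr)
    _ = ENNReal.ofReal (D ^ p * (2 * m + 1) ^ e + 1) := by
        rw [hRp, ofReal_add (by positivity) zero_le_one, ofReal_one]
    _ ≤ ENNReal.ofReal ((γ + 2 * γ * m) ^ e) := by
        refine ofReal_le_ofReal ?_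
        rw [show γ + 2 * γ * m = γ * (2 * m + 1) by ring]
        exact rpow_mul_add_one_le (by positivity) hs he

/-- **Bound on weighted moments.**
If `f` is bounded below and `c_ℓ |x|^ℓ - C_ℓ ≤ f(x) - f_* ≤ c_u |x|^u + C_u` with
`u ≥ ℓ > 0`, then for all `p, q > 0` there are `C₁, C₂ > 0`, depending only on
`p, q, β, u, ℓ, c_u, C_u, c_ℓ, C_ℓ`, such that for every probability measure `μ`
with finite `q`-th moment,
`(∫ |x|^p e^{-βf} dμ)/(∫ e^{-βf} dμ) ≤ (C₁ + C₂ ∫ |x|^q dμ)^{pu/(qℓ)}`. -/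
theorem weighted_moment_growth_bound
    (β : ℝ) (hβ : 0 < β) (d : ℕ) (hd : 1 ≤ d)
    (u ℓ : ℝ) (hℓ : 0 < ℓ) (hℓu : ℓ ≤ u)
    (cu Cu cl Cl : ℝ) (hcu : 0 < cu) (hCu : 0 < Cu) (hcl : 0 < cl) (hCl : 0 < Cl)
    (p q : ℝ) (hp : 0 < p) (hq : 0 < q) :
    ∃ C1 > 0, ∃ C2 > 0, ∀ f : Rd d → ℝ, Measurable f → BddBelow (Set.range f) →
      (∀ x : Rd d, cl * ‖x‖ ^ ℓ - Cl ≤ f x - fStar f) →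
      (∀ x : Rd d, f x - fStar f ≤ cu * ‖x‖ ^ u + Cu) →
      ∀ μ : Measure (Rd d), IsProbabilityMeasure μ → MomFin q μ →
        (∫⁻ x, (‖x‖₊ : ℝ≥0∞) ^ p * ENNReal.ofReal (Real.exp (-β * f x)) ∂μ) /
            (∫⁻ x, ENNReal.ofReal (Real.exp (-β * f x)) ∂μ)
          ≤ ENNReal.ofReal
              ((C1 + C2 * (∫⁻ x, (‖x‖₊ : ℝ≥0∞) ^ q ∂μ).toReal) ^ (p * u / (q * ℓ))) :=
  weighted_moment_growth_bound_general β hβ d u ℓ hℓ hℓu cu Cu cl Cl hcu hcl p q hp hq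

end
end

section
/- Fix β > 0 and d ≥ 1. Suppose f : ℝ^d → ℝ is bounded from below by f_* = inf f and there are a real number ℓ > 0 and positive constants c_u, C_u, c_ℓ, C_ℓ such that c_ℓ |x|^ℓ − C_ℓ ≤ f(x) − f_* ≤ c_u |x|^ℓ + C_u for all x ∈ ℝ^d. Then for all 0 < p ≤ q there exists a constant C_2 > 0, depending only on p, q, β, ℓ, c_u, C_u, c_ℓ, C_ℓ, such that for every Borel probability measure μ on ℝ^d with ∫ |x|^q μ(dx) < ∞, (∫ |x|^p e^{−β f(x)} μ(dx)) / (∫ e^{−β f(x)} μ(dx)) ≤ (C_2 ∫ |x|^q μ(dx))^{p/q}. -/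
open MeasureTheory ENNReal
open scoped NNReal

noncomputable section

/-!
If `|x| ≤ m |y|` then `|x|^p ≤ m^p |y|^p`; otherwise `|x|` is so much larger than `|y|` that the
two growth bounds force `f y ≤ f x + C_ℓ + C_u`, i.e. `e^{-β f x} ≤ e^{β (C_ℓ + C_u)} e^{-β f y}`.
Either way `|x|^p e^{-β f x} ≤ K (|x|^p e^{-β f y} + |y|^p e^{-β f x})`, and integrating in
`(x, y)` against `μ ⊗ μ` separates the `p`-th moment from the normalising integral.
Lyapunov's inequality then bounds the `p`-th moment by the `q`-th.
-/

theorem exists_pos_le_mul_rpow {c cl ℓ : ℝ} (hcl : 0 < cl) (hℓ : ℓ ≠ 0) :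
    ∃ m > 0, c ≤ cl * m ^ ℓ := by
  have hpos : 0 < max c cl / cl := div_pos (lt_max_of_lt_right hcl) hcl
  refine ⟨(max c cl / cl) ^ ℓ⁻¹, Real.rpow_pos_of_pos hpos _, ?_⟩
  rw [Real.rpow_inv_rpow hpos.le hℓ, mul_div_cancel₀ _ hcl.ne']
  exact le_max_left c cl

theorem norm_le_mul_norm_or_le_add_of_growth {E : Type*} [SeminormedAddCommGroup E]
    {f : E → ℝ} {fs ℓ cl Cl cu Cu m : ℝ} (hℓ : 0 ≤ ℓ) (hcl : 0 ≤ cl) (hm : 0 ≤ m)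
    (hmℓ : cu ≤ cl * m ^ ℓ) (hlow : ∀ x, cl * ‖x‖ ^ ℓ - Cl ≤ f x - fs)
    (hup : ∀ x, f x - fs ≤ cu * ‖x‖ ^ ℓ + Cu) (x y : E) :
    ‖x‖ ≤ m * ‖y‖ ∨ f y ≤ f x + (Cl + Cu) := by
  refine or_iff_not_imp_left.2 fun hxy => ?_
  have hgrowth : cu * ‖y‖ ^ ℓ ≤ cl * ‖x‖ ^ ℓ :=
    calc cu * ‖y‖ ^ ℓ ≤ cl * m ^ ℓ * ‖y‖ ^ ℓ := by gcongr
      _ = cl * (m * ‖y‖) ^ ℓ := by rw [Real.mul_rpow hm (norm_nonneg y), mul_assoc]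
      _ ≤ cl * ‖x‖ ^ ℓ := by gcongr; exact (not_le.1 hxy).le
  linarith [hlow x, hup y]

theorem rpow_nnnorm_le_or_exp_le_of_growth {E : Type*} [SeminormedAddCommGroup E]
    {f : E → ℝ} {fs β ℓ cl Cl cu Cu m p : ℝ} (hβ : 0 ≤ β) (hp : 0 ≤ p) (hℓ : 0 ≤ ℓ)
    (hcl : 0 ≤ cl) (hm : 0 ≤ m) (hmℓ : cu ≤ cl * m ^ ℓ)
    (hlow : ∀ x, cl * ‖x‖ ^ ℓ - Cl ≤ f x - fs) (hup : ∀ x, f x - fs ≤ cu * ‖x‖ ^ ℓ + Cu)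
    (x y : E) :
    (‖x‖₊ : ℝ≥0∞) ^ p ≤ ENNReal.ofReal (m ^ p) * (‖y‖₊ : ℝ≥0∞) ^ p ∨
      ENNReal.ofReal (Real.exp (-β * f x)) ≤
        ENNReal.ofReal (Real.exp (β * (Cl + Cu))) * ENNReal.ofReal (Real.exp (-β * f y)) := by
  refine (norm_le_mul_norm_or_le_add_of_growth hℓ hcl hm hmℓ hlow hup x y).imp
    (fun h => ?_) (fun h => ?_)
  · have hnorm : (‖x‖₊ : ℝ≥0∞) ≤ ENNReal.ofReal m * ‖y‖₊ := by
      rw [← enorm_eq_nnnorm, ← enorm_eq_nnnorm, ← ofReal_norm, ← ofReal_norm,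
        ← ENNReal.ofReal_mul hm]
      exact ENNReal.ofReal_le_ofReal h
    calc (‖x‖₊ : ℝ≥0∞) ^ p ≤ (ENNReal.ofReal m * ‖y‖₊) ^ p := by gcongr
      _ = ENNReal.ofReal (m ^ p) * (‖y‖₊ : ℝ≥0∞) ^ p := by
          rw [ENNReal.mul_rpow_of_nonneg _ _ hp, ENNReal.ofReal_rpow_of_nonneg hm hp]
  · rw [← ENNReal.ofReal_mul (Real.exp_pos _).le, ← Real.exp_add]
    gcongr
    nlinarith

theorem lintegral_mul_le_of_forall_le_mul_or_le_mul {α : Type*} [MeasurableSpace α]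
    {μ : Measure α} [IsProbabilityMeasure μ] {a w : α → ℝ≥0∞} (ha : Measurable a)
    (hw : Measurable w) {K : ℝ≥0∞} (h : ∀ x y, a x ≤ K * a y ∨ w x ≤ K * w y) :
    ∫⁻ x, a x * w x ∂μ ≤ 2 * K * (∫⁻ x, a x ∂μ) * ∫⁻ x, w x ∂μ := by
  have hpair : ∀ x y, a x * w x ≤ K * a y * w x + K * a x * w y := fun x y => by
    rcases h x y with hxy | hxy
    · calc a x * w x ≤ K * a y * w x := by gcongr
        _ ≤ _ := le_self_add
    · calc a x * w x ≤ a x * (K * w y) := by gcongr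
        _ = K * a x * w y := by ring
        _ ≤ _ := le_add_self
  calc ∫⁻ x, a x * w x ∂μ = ∫⁻ x, ∫⁻ _, a x * w x ∂μ ∂μ := by simp
    _ ≤ ∫⁻ x, ∫⁻ y, K * a y * w x + K * a x * w y ∂μ ∂μ := by
        gcongr with x y; exact hpair x y
    _ = ∫⁻ x, K * (∫⁻ y, a y ∂μ) * w x + K * a x * ∫⁻ y, w y ∂μ ∂μ := by
        congr with x
        rw [lintegral_add_left ((ha.const_mul K).mul_const _),
          lintegral_mul_const _ (ha.const_mul K), lintegral_const_mul _ ha,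
          lintegral_const_mul _ hw]
    _ = 2 * K * (∫⁻ x, a x ∂μ) * ∫⁻ x, w x ∂μ := by
        rw [lintegral_add_left (hw.const_mul _), lintegral_const_mul _ hw,
          lintegral_mul_const _ (ha.const_mul K), lintegral_const_mul _ ha]
        ring

theorem lintegral_nnnorm_rpow_le_of_exponent_le {E : Type*} [NormedAddCommGroup E]
    [MeasurableSpace E] [OpensMeasurableSpace E] {μ : Measure E} [IsProbabilityMeasure μ]
    {p q : ℝ} (hp : 0 < p) (hpq : p ≤ q) :
    ∫⁻ x, (‖x‖₊ : ℝ≥0∞) ^ p ∂μ ≤ (∫⁻ x, (‖x‖₊ : ℝ≥0∞) ^ q ∂μ) ^ (p / q) := by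
  have h := eLpNorm'_le_eLpNorm'_of_exponent_le hp hpq μ measurable_norm.aestronglyMeasurable
  simp only [eLpNorm', enorm_norm] at h
  have := ENNReal.rpow_le_rpow h hp.le
  rwa [← ENNReal.rpow_mul, ← ENNReal.rpow_mul, one_div_mul_cancel hp.ne', ENNReal.rpow_one,
    one_div_mul_eq_div] at this

theorem ENNReal.ofReal_mul_rpow {c r : ℝ} (hc : 0 ≤ c) (hr : 0 < r) {M : ℝ≥0∞} (hM : M ≠ ⊤) :
    ENNReal.ofReal c * M ^ r = ENNReal.ofReal ((c ^ r⁻¹ * M.toReal) ^ r) := by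
  rw [Real.mul_rpow (by positivity) toReal_nonneg, Real.rpow_inv_rpow hc hr.ne',
    ENNReal.ofReal_mul hc, ← ENNReal.ofReal_rpow_of_nonneg toReal_nonneg hr.le, ofReal_toReal hM]

theorem weighted_moment_growth_bound_same_exponent_general
    (β : ℝ) (hβ : 0 < β) (d : ℕ)
    (ℓ : ℝ) (hℓ : 0 < ℓ)
    (cu Cu cl Cl : ℝ) (hcl : 0 < cl)
    (p q : ℝ) (hp : 0 < p) (hpq : p ≤ q) :
    ∃ C2 > 0, ∀ f : Rd d → ℝ, Measurable f → BddBelow (Set.range f) →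
      (∀ x : Rd d, cl * ‖x‖ ^ ℓ - Cl ≤ f x - fStar f) →
      (∀ x : Rd d, f x - fStar f ≤ cu * ‖x‖ ^ ℓ + Cu) →
      ∀ μ : Measure (Rd d), IsProbabilityMeasure μ → MomFin q μ →
        (∫⁻ x, (‖x‖₊ : ℝ≥0∞) ^ p * ENNReal.ofReal (Real.exp (-β * f x)) ∂μ) /
            (∫⁻ x, ENNReal.ofReal (Real.exp (-β * f x)) ∂μ)
          ≤ ENNReal.ofReal
              ((C2 * (∫⁻ x, (‖x‖₊ : ℝ≥0∞) ^ q ∂μ).toReal) ^ (p / q)) := by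
  obtain ⟨m, hm, hmℓ⟩ := exists_pos_le_mul_rpow (c := cu) hcl hℓ.ne'
  set K := max (m ^ p) (Real.exp (β * (Cl + Cu)))
  have hK : 0 < K := lt_max_of_lt_right (Real.exp_pos _)
  refine ⟨(2 * K) ^ (p / q)⁻¹, by positivity, fun f hf _ hlow hup μ _ hq => ?_⟩
  have hpair (x y : Rd d) :
      (‖x‖₊ : ℝ≥0∞) ^ p ≤ ENNReal.ofReal K * (‖y‖₊ : ℝ≥0∞) ^ p ∨
        ENNReal.ofReal (Real.exp (-β * f x)) ≤
          ENNReal.ofReal K * ENNReal.ofReal (Real.exp (-β * f y)) :=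
    (rpow_nnnorm_le_or_exp_le_of_growth hβ.le hp.le hℓ.le hcl.le hm.le hmℓ hlow hup x y).imp
      (fun h => h.trans (by gcongr; exact le_max_left _ _))
      (fun h => h.trans (by gcongr; exact le_max_right (m ^ p) _))
  refine ENNReal.div_le_of_le_mul ?_
  calc _ ≤ 2 * ENNReal.ofReal K * (∫⁻ x, (‖x‖₊ : ℝ≥0∞) ^ p ∂μ) *
        ∫⁻ x, ENNReal.ofReal (Real.exp (-β * f x)) ∂μ :=
        lintegral_mul_le_of_forall_le_mul_or_le_mul
          (measurable_nnnorm.coe_nnreal_ennreal.pow_const p)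
          (hf.const_mul (-β)).exp.ennreal_ofReal hpair
    _ ≤ ENNReal.ofReal (2 * K) * (∫⁻ x, (‖x‖₊ : ℝ≥0∞) ^ q ∂μ) ^ (p / q) *
        ∫⁻ x, ENNReal.ofReal (Real.exp (-β * f x)) ∂μ := by
        rw [ENNReal.ofReal_mul zero_le_two, ENNReal.ofReal_ofNat]
        gcongr
        exact lintegral_nnnorm_rpow_le_of_exponent_le hp hpq
    _ = _ := by
        rw [ENNReal.ofReal_mul_rpow (by positivity) (div_pos hp (hp.trans_le hpq)) hq.ne]

/-- **Bound on weighted moments, case `u = ℓ`, `p ≤ q`: no additive constant.**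
If `f` is bounded below and `c_ℓ |x|^ℓ - C_ℓ ≤ f(x) - f_* ≤ c_u |x|^ℓ + C_u` with
`ℓ > 0`, then for all `0 < p ≤ q` there is `C₂ > 0`, depending only on
`p, q, β, ℓ, c_u, C_u, c_ℓ, C_ℓ`, such that for every probability measure `μ`
with finite `q`-th moment,
`(∫ |x|^p e^{-βf} dμ)/(∫ e^{-βf} dμ) ≤ (C₂ ∫ |x|^q dμ)^{p/q}`. -/
theorem weighted_moment_growth_bound_same_exponent
    (β : ℝ) (hβ : 0 < β) (d : ℕ) (hd : 1 ≤ d)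
    (ℓ : ℝ) (hℓ : 0 < ℓ)
    (cu Cu cl Cl : ℝ) (hcu : 0 < cu) (hCu : 0 < Cu) (hcl : 0 < cl) (hCl : 0 < Cl)
    (p q : ℝ) (hp : 0 < p) (hpq : p ≤ q) :
    ∃ C2 > 0, ∀ f : Rd d → ℝ, Measurable f → BddBelow (Set.range f) →
      (∀ x : Rd d, cl * ‖x‖ ^ ℓ - Cl ≤ f x - fStar f) →
      (∀ x : Rd d, f x - fStar f ≤ cu * ‖x‖ ^ ℓ + Cu) →
      ∀ μ : Measure (Rd d), IsProbabilityMeasure μ → MomFin q μ →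
        (∫⁻ x, (‖x‖₊ : ℝ≥0∞) ^ p * ENNReal.ofReal (Real.exp (-β * f x)) ∂μ) /
            (∫⁻ x, ENNReal.ofReal (Real.exp (-β * f x)) ∂μ)
          ≤ ENNReal.ofReal
              ((C2 * (∫⁻ x, (‖x‖₊ : ℝ≥0∞) ^ q ∂μ).toReal) ^ (p / q)) :=
  weighted_moment_growth_bound_same_exponent_general β hβ d ℓ hℓ cu Cu cl Cl hcl p q hp hpq

end
end
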